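/- arXiv:2104.00034 — 9 statements merged into one kernel-verified Lean document; each statement's English description precedes it below -/
import Mathlib

section
/- For every MPBKP instance, the optimal value OPT of the integer program equals f_T(c_T), where f_t is the sequence of step functions defined by truncated (max,+)-convolutions: f_1 = f_{I(1)}^{c_1} and f_t = (f_{t-1} ⊕ f_{I(t)})^{c_t} for 2 ≤ t ≤ T. -/
open scoped BigOperators

/-- Knapsack step function `f_I` of a set `I` of items with rewards `r` and sizes `q`:
`f_I(c) = max { ∑_{i ∈ S} r_i : S ⊆ I, ∑_{i ∈ S} q_i ≤ c }` for `c ≥ 0`, and `⊥ = -∞` for `c < 0`. -/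
noncomputable def knapFn {n : ℕ} (r q : Fin n → ℕ) (I : Finset (Fin n)) : ℝ → EReal :=
  fun cap =>
    if cap < 0 then ⊥
    else ((I.powerset.filter fun S => (∑ i ∈ S, (q i : ℝ)) ≤ cap).sup
      fun S => ((∑ i ∈ S, (r i : ℝ) : ℝ) : EReal))

/-- The (max,+)-convolution `(f ⊕ g)(c) = sup_{c'} (f(c') + g(c - c'))`. -/
noncomputable def conv (f g : ℝ → EReal) : ℝ → EReal :=
  fun x => ⨆ y : ℝ, f y + g (x - y)

/-- Truncation `f^{c'}`: equals `f` on `(-∞, c']` and `-∞` above. -/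
noncomputable def trunc (f : ℝ → EReal) (c : ℝ) : ℝ → EReal :=
  fun x => if x ≤ c then f x else ⊥

open Classical in
/-- Optimal value of the MPBKP integer program. -/
noncomputable def mpbkpOPT {n : ℕ} (T : ℕ) (c : ℕ → ℕ) (r q : Fin n → ℕ) (d : Fin n → ℕ) : ℕ :=
  ((Finset.univ : Finset (Finset (Fin n))).filter fun S : Finset (Fin n) =>
      ∀ t ∈ Finset.Icc 1 T, (∑ i ∈ S.filter (fun i => d i ≤ t), q i) ≤ c t).sup
    fun S => ∑ i ∈ S, r i

open Classical in
/-- Sets feasible for the first `t` cumulative constraints, with total size at most `x`. -/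
noncomputable def feasSet {n : ℕ} (c : ℕ → ℕ) (q d : Fin n → ℕ) (t : ℕ) (x : ℝ) :
    Finset (Finset (Fin n)) :=
  Finset.univ.filter fun S =>
    (∀ i ∈ S, d i ≤ t) ∧
    (∀ s, 1 ≤ s → s < t → (∑ i ∈ S.filter fun i => d i ≤ s, (q i : ℝ)) ≤ (c s : ℝ)) ∧
    (∑ i ∈ S, (q i : ℝ)) ≤ x

lemma mem_feasSet {n : ℕ} {c : ℕ → ℕ} {q d : Fin n → ℕ} {t : ℕ} {x : ℝ} {S : Finset (Fin n)} :
    S ∈ feasSet c q d t x ↔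
      (∀ i ∈ S, d i ≤ t) ∧
      (∀ s, 1 ≤ s → s < t → (∑ i ∈ S.filter fun i => d i ≤ s, (q i : ℝ)) ≤ (c s : ℝ)) ∧
      (∑ i ∈ S, (q i : ℝ)) ≤ x := by
  simp [feasSet]

/-- The "prefix optimum" function. -/
noncomputable def prefOpt {n : ℕ} (c : ℕ → ℕ) (r q d : Fin n → ℕ) (t : ℕ) (x : ℝ) : EReal :=
  if x < 0 ∨ (c t : ℝ) < x then ⊥
  else (feasSet c q d t x).sup fun S => ((∑ i ∈ S, (r i : ℝ) : ℝ) : EReal)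

lemma prefOpt_eq {n : ℕ} (T : ℕ)
    (c : ℕ → ℕ) (hmono : ∀ s t, s ≤ t → t ≤ T → c s ≤ c t)
    (r q : Fin n → ℕ)
    (d : Fin n → ℕ) (hd : ∀ i, 1 ≤ d i ∧ d i ≤ T)
    (f : ℕ → ℝ → EReal)
    (hf1 : f 1 = trunc (knapFn r q (Finset.univ.filter fun i => d i = 1)) (c 1))
    (hft : ∀ t, 2 ≤ t → t ≤ T →
      f t = trunc (conv (f (t - 1)) (knapFn r q (Finset.univ.filter fun i => d i = t))) (c t)) :
    ∀ t, 1 ≤ t → t ≤ T → f t = prefOpt c r q d t := by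
  intro t
  induction t with
  | zero => omega
  | succ k IH =>
    intro _ hkT
    rcases Nat.eq_zero_or_pos k with hk0 | hk
    · subst hk0
      rw [hf1]
      funext x
      by_cases hx1 : x ≤ (c 1 : ℝ)
      · by_cases hx0 : x < 0
        · simp [trunc, knapFn, prefOpt, hx1, hx0]
        · rw [trunc, if_pos hx1, knapFn, if_neg hx0, prefOpt,
            if_neg (by push_neg; exact ⟨not_lt.mp hx0, hx1⟩)]
          congr 1
          ext S
          simp only [Finset.mem_filter, Finset.mem_powerset, mem_feasSet,
            Finset.subset_iff, Finset.mem_filter, Finset.mem_univ, true_and]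
          constructor
          · rintro ⟨hsub, htot⟩
            refine ⟨fun i hi => (hsub hi).le, fun s hs1 hs2 => by omega, htot⟩
          · rintro ⟨hdle, _, htot⟩
            exact ⟨fun i hi => le_antisymm (hdle i hi) (hd i).1, htot⟩
      · simp [trunc, prefOpt, hx1, not_le.mp hx1]
    · -- inductive step: k ≥ 1, t = k + 1 ≥ 2
      have hIH : f k = prefOpt c r q d k := IH hk (by omega)
      have hstep := hft (k + 1) (by omega) hkT
      simp only [Nat.add_sub_cancel] at hstep
      rw [hstep, hIH]
      funext x
      by_cases hx1 : x ≤ (c (k + 1) : ℝ)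
      · rw [trunc, if_pos hx1]
        by_cases hx0 : x < 0
        · rw [prefOpt, if_pos (Or.inl hx0), conv]
          rw [iSup_eq_bot]
          intro y
          by_cases hy : y < 0
          · simp [prefOpt, hy]
          · have : x - y < 0 := by push_neg at hy; linarith
            simp [knapFn, this]
        · push_neg at hx0
          rw [prefOpt, if_neg (by push_neg; exact ⟨hx0, hx1⟩), conv]
          apply le_antisymm
          · apply iSup_le
            intro y
            by_cases h1 : y < 0 ∨ (c k : ℝ) < y
            · simp [prefOpt, h1]
            · push_neg at h1
              by_cases h2 : x - y < 0
              · simp [knapFn, h2]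
              · push_neg at h2
                rw [prefOpt, if_neg (by push_neg; exact ⟨not_lt.mp (by push_neg; exact h1.1 : ¬ y < 0), h1.2⟩),
                  knapFn, if_neg (not_lt.mpr h2)]
                set A := feasSet c q d k y with hA
                set B := ((Finset.univ.filter fun i => d i = k + 1).powerset.filter
                  fun S => (∑ i ∈ S, (q i : ℝ)) ≤ x - y) with hB
                rcases A.eq_empty_or_nonempty with hAe | hAne
                · simp [hAe]
                rcases B.eq_empty_or_nonempty with hBe | hBne
                · simp [hBe]
                obtain ⟨S1, hS1, hS1e⟩ := Finset.exists_mem_eq_sup A hAne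
                  (fun S => ((∑ i ∈ S, (r i : ℝ) : ℝ) : EReal))
                obtain ⟨S2, hS2, hS2e⟩ := Finset.exists_mem_eq_sup B hBne
                  (fun S => ((∑ i ∈ S, (r i : ℝ) : ℝ) : EReal))
                rw [hS1e, hS2e]
                rw [hA, mem_feasSet] at hS1
                obtain ⟨hS1d, hS1mid, hS1tot⟩ := hS1
                rw [hB, Finset.mem_filter, Finset.mem_powerset] at hS2
                obtain ⟨hS2sub, hS2tot⟩ := hS2
                have hd2 : ∀ i ∈ S2, d i = k + 1 := fun i hi =>
                  (Finset.mem_filter.mp (hS2sub hi)).2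
                have hdisj : Disjoint S1 S2 := Finset.disjoint_left.mpr fun i hi1 hi2 => by
                  have h1' := hS1d i hi1
                  have h2' := hd2 i hi2
                  omega
                have hmem : S1 ∪ S2 ∈ feasSet c q d (k + 1) x := by
                  rw [mem_feasSet]
                  refine ⟨?_, ?_, ?_⟩
                  · intro i hi
                    rcases Finset.mem_union.mp hi with h | h
                    · exact le_trans (hS1d i h) (Nat.le_succ k)
                    · exact (hd2 i h).le
                  · intro s hs1 hsk1
                    have hfil : (S1 ∪ S2).filter (fun i => d i ≤ s)
                        = S1.filter (fun i => d i ≤ s) := by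
                      rw [Finset.filter_union]
                      have h0 : S2.filter (fun i => d i ≤ s) = ∅ :=
                        Finset.filter_eq_empty_iff.mpr fun i hi => by
                          have := hd2 i hi; omega
                      rw [h0, Finset.union_empty]
                    rw [hfil]
                    rcases lt_or_eq_of_le (Nat.lt_succ_iff.mp hsk1) with hs | hs
                    · exact hS1mid s hs1 hs
                    · subst hs
                      have hfe : S1.filter (fun i => d i ≤ s) = S1 :=
                        Finset.filter_true_of_mem hS1d
                      rw [hfe]
                      exact hS1tot.trans h1.2
                  · rw [Finset.sum_union hdisj]
                    linarith
                have hval : (((∑ i ∈ S1, (r i : ℝ) : ℝ) : EReal)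
                    + ((∑ i ∈ S2, (r i : ℝ) : ℝ) : EReal))
                    = (((∑ i ∈ S1 ∪ S2, (r i : ℝ) : ℝ) : ℝ) : EReal) := by
                  rw [← EReal.coe_add, Finset.sum_union hdisj]
                rw [hval]
                exact Finset.le_sup (f := fun S => (((∑ i ∈ S, (r i : ℝ) : ℝ) : ℝ) : EReal)) hmem
          · apply Finset.sup_le
            intro S hS
            rw [mem_feasSet] at hS
            obtain ⟨hSd, hSmid, hStot⟩ := hS
            set S1 := S.filter (fun i => d i ≤ k) with hS1def
            set S2 := S.filter (fun i => d i = k + 1) with hS2def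
            have hsplit : S = S1 ∪ S2 := by
              ext i
              simp only [hS1def, hS2def, Finset.mem_union, Finset.mem_filter]
              constructor
              · intro hi
                by_cases h : d i ≤ k
                · exact Or.inl ⟨hi, h⟩
                · exact Or.inr ⟨hi, by have := hSd i hi; omega⟩
              · rintro (⟨h, _⟩ | ⟨h, _⟩) <;> exact h
            have hdisj : Disjoint S1 S2 := Finset.disjoint_left.mpr fun i hi1 hi2 => by
              rw [hS1def, Finset.mem_filter] at hi1
              rw [hS2def, Finset.mem_filter] at hi2
              omega
            set y := ∑ i ∈ S1, (q i : ℝ) with hydef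
            have hy0 : 0 ≤ y := Finset.sum_nonneg fun i _ => Nat.cast_nonneg _
            have hyk : y ≤ (c k : ℝ) := by
              have := hSmid k hk (Nat.lt_succ_self k)
              rw [← hS1def, ← hydef] at this
              exact this
            have hsum : (∑ i ∈ S, (q i : ℝ)) = y + ∑ i ∈ S2, (q i : ℝ) := by
              rw [hsplit, Finset.sum_union hdisj, hydef]
            have hS2q0 : (0 : ℝ) ≤ ∑ i ∈ S2, (q i : ℝ) :=
              Finset.sum_nonneg fun i _ => Nat.cast_nonneg _
            have hG : (((∑ i ∈ S1, (r i : ℝ) : ℝ) : ℝ) : EReal) ≤ prefOpt c r q d k y := by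
              rw [prefOpt, if_neg (by push_neg; exact ⟨hy0, hyk⟩)]
              apply Finset.le_sup (f := fun S => (((∑ i ∈ S, (r i : ℝ) : ℝ) : ℝ) : EReal))
              rw [mem_feasSet]
              refine ⟨?_, ?_, le_of_eq hydef.symm⟩
              · intro i hi
                rw [hS1def, Finset.mem_filter] at hi
                exact hi.2
              · intro s hs1 hsk
                have hfe : S1.filter (fun i => d i ≤ s) = S.filter (fun i => d i ≤ s) := by
                  rw [hS1def, Finset.filter_filter]
                  apply Finset.filter_congr
                  intro i _
                  constructor
                  · intro h; exact h.2
                  · intro h; exact ⟨by omega, h⟩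
                rw [hfe]
                exact hSmid s hs1 (by omega)
            have hK : (((∑ i ∈ S2, (r i : ℝ) : ℝ) : ℝ) : EReal)
                ≤ knapFn r q (Finset.univ.filter fun i => d i = k + 1) (x - y) := by
              rw [knapFn, if_neg (not_lt.mpr (by linarith))]
              apply Finset.le_sup (f := fun S => (((∑ i ∈ S, (r i : ℝ) : ℝ) : ℝ) : EReal))
              rw [Finset.mem_filter, Finset.mem_powerset]
              constructor
              · intro i hi
                rw [hS2def, Finset.mem_filter] at hi
                exact Finset.mem_filter.mpr ⟨Finset.mem_univ i, hi.2⟩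
              · linarith
            have hval : (((∑ i ∈ S, (r i : ℝ) : ℝ) : ℝ) : EReal)
                = (((∑ i ∈ S1, (r i : ℝ) : ℝ) : ℝ) : EReal)
                  + (((∑ i ∈ S2, (r i : ℝ) : ℝ) : ℝ) : EReal) := by
              rw [← EReal.coe_add, hsplit, Finset.sum_union hdisj]
            rw [hval]
            exact le_trans (add_le_add hG hK)
              (le_iSup (fun y' => prefOpt c r q d k y'
                + knapFn r q (Finset.univ.filter fun i => d i = k + 1) (x - y')) y)
      · simp [trunc, prefOpt, hx1, not_le.mp hx1]

/-- For every MPBKP instance, the optimum of the IP equals `f_T(c_T)` where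
`f_1 = f_{I(1)}^{c_1}` and `f_t = (f_{t-1} ⊕ f_{I(t)})^{c_t}` for `2 ≤ t ≤ T`. -/
theorem stmt0 {n : ℕ} (T : ℕ) (hT : 1 ≤ T)
    (c : ℕ → ℕ) (hc0 : c 0 = 0) (hmono : ∀ s t, s ≤ t → t ≤ T → c s ≤ c t)
    (r q : Fin n → ℕ) (hr : ∀ i, 0 < r i) (hq : ∀ i, 0 < q i)
    (d : Fin n → ℕ) (hd : ∀ i, 1 ≤ d i ∧ d i ≤ T)
    (f : ℕ → ℝ → EReal)
    (hf1 : f 1 = trunc (knapFn r q (Finset.univ.filter fun i => d i = 1)) (c 1))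
    (hft : ∀ t, 2 ≤ t → t ≤ T →
      f t = trunc (conv (f (t - 1)) (knapFn r q (Finset.univ.filter fun i => d i = t))) (c t)) :
    ((mpbkpOPT T c r q d : ℝ) : EReal) = f T (c T) := by
  classical
  rw [prefOpt_eq T c hmono r q d hd f hf1 hft T hT le_rfl]
  rw [prefOpt, if_neg (by push_neg; exact ⟨Nat.cast_nonneg _, le_rfl⟩)]
  -- The feasible set coincides with the set in the definition of mpbkpOPT
  have hsets : (Finset.univ.filter fun S : Finset (Fin n) =>
      ∀ t ∈ Finset.Icc 1 T, (∑ i ∈ S.filter (fun i => d i ≤ t), q i) ≤ c t)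
      = feasSet c q d T (c T) := by
    ext S
    simp only [Finset.mem_filter, Finset.mem_univ, true_and, mem_feasSet, Finset.mem_Icc]
    constructor
    · intro h
      refine ⟨fun i _ => (hd i).2, ?_, ?_⟩
      · intro s hs1 hsT
        have := h s ⟨hs1, hsT.le⟩
        push_cast
        exact_mod_cast this
      · have := h T ⟨hT, le_rfl⟩
        rw [Finset.filter_true_of_mem (fun i _ => (hd i).2)] at this
        push_cast
        exact_mod_cast this
    · rintro ⟨_, hmid, htot⟩
      intro t ht
      rcases lt_or_eq_of_le ht.2 with hlt | heq
      · have := hmid t ht.1 hlt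
        exact_mod_cast this
      · subst heq
        rw [Finset.filter_true_of_mem (fun i _ => (hd i).2)]
        exact_mod_cast htot
  rw [mpbkpOPT, hsets]
  -- Now compare the natural-number sup with the EReal sup
  have hne : (feasSet c q d T ((c T : ℝ))).Nonempty := by
    refine ⟨∅, ?_⟩
    rw [mem_feasSet]
    refine ⟨by simp, by simp, by simp⟩
  apply le_antisymm
  · obtain ⟨S0, hS0, hS0e⟩ := Finset.exists_mem_eq_sup _ hne (fun S : Finset (Fin n) => ∑ i ∈ S, r i)
    rw [hS0e]
    have : (((∑ i ∈ S0, r i : ℕ) : ℝ) : EReal) = (((∑ i ∈ S0, (r i : ℝ) : ℝ) : ℝ) : EReal) := by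
      push_cast
      rfl
    rw [this]
    exact Finset.le_sup (f := fun S => (((∑ i ∈ S, (r i : ℝ) : ℝ) : ℝ) : EReal)) hS0
  · apply Finset.sup_le
    intro S hS
    have h1 : (∑ i ∈ S, (r i : ℝ)) = ((∑ i ∈ S, r i : ℕ) : ℝ) := by push_cast; rfl
    rw [h1]
    have h2 : (∑ i ∈ S, r i : ℕ) ≤ (feasSet c q d T ((c T : ℝ))).sup
        (fun S : Finset (Fin n) => ∑ i ∈ S, r i) :=
      Finset.le_sup (f := fun S : Finset (Fin n) => ∑ i ∈ S, r i) hS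
    exact EReal.coe_le_coe_iff.mpr (Nat.cast_le.mpr h2)
end

section
/- Suppose for each t ∈ {1,…,T} a function f̃_{I(t)} approximates f_{I(t)} with factor 1+ε, and define f̃_1 = f̃_{I(1)}^{c_1} and, for 2 ≤ t ≤ T, ĥ_t = (f̃_{t−1} ⊕ f̃_{I(t)})^{c_t}, where f̃_t is any function satisfying f̃_t(c) ≤ ĥ_t(c) ≤ (1+ε)·f̃_t(c) for all c (a rounding-down of ĥ_t, e.g. to values of the form r_0·(1+ε)^k). Then for every t ∈ {1,…,T}, f̃_t(c) ≤ f_t(c) ≤ (1+ε)^t · f̃_t(c) for all 0 ≤ c ≤ c_t. -/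
open scoped BigOperators

/-- A function taking values in `{-∞} ∪ [0, ∞)`. -/
def GoodVal (f : ℝ → EReal) : Prop :=
  ∀ x, f x = ⊥ ∨ ∃ y : ℝ, 0 ≤ y ∧ f x = (y : EReal)

lemma scale_add' {k : ℝ} (hk : 0 < k) {a b : EReal}
    (ha : a = ⊥ ∨ ∃ y : ℝ, 0 ≤ y ∧ a = (y:EReal))
    (hb : b = ⊥ ∨ ∃ y : ℝ, 0 ≤ y ∧ b = (y:EReal)) :
    (k:EReal) * (a + b) = (k:EReal)*a + (k:EReal)*b := by
  rcases ha with rfl | ⟨y,hy,rfl⟩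
  · rw [EReal.bot_add, EReal.coe_mul_bot_of_pos hk, EReal.bot_add]
  rcases hb with rfl | ⟨z,hz,rfl⟩
  · rw [EReal.add_bot, EReal.coe_mul_bot_of_pos hk, EReal.add_bot]
  · norm_cast; ring

lemma scale_mono' {a b : ℝ} (ha : 0 < a) (hab : a ≤ b) {v : EReal}
    (hv : v = ⊥ ∨ ∃ y : ℝ, 0 ≤ y ∧ v = (y:EReal)) :
    (a:EReal) * v ≤ (b:EReal) * v := by
  rcases hv with rfl | ⟨y,hy,rfl⟩
  · rw [EReal.coe_mul_bot_of_pos ha]; exact bot_le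
  · norm_cast; exact mul_le_mul_of_nonneg_right hab hy

lemma knapFn_neg {n : ℕ} (r q : Fin n → ℕ) (I : Finset (Fin n)) {x : ℝ} (hx : x < 0) :
    knapFn r q I x = ⊥ := if_pos hx

lemma trunc_of_le (f : ℝ → EReal) {c x : ℝ} (h : x ≤ c) : trunc f c x = f x := if_pos h

lemma trunc_of_gt (f : ℝ → EReal) {c x : ℝ} (h : c < x) : trunc f c x = ⊥ := if_neg (not_le.2 h)

/-- If each `f̃_{I(t)}` approximates `f_{I(t)}` with factor `1+ε`, `f̃_1 = f̃_{I(1)}^{c_1}`,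
and for `2 ≤ t ≤ T` the function `f̃_t` is a rounding-down of
`ĥ_t = (f̃_{t-1} ⊕ f̃_{I(t)})^{c_t}` (i.e. `f̃_t ≤ ĥ_t ≤ (1+ε) f̃_t` pointwise), then
`f̃_t(c) ≤ f_t(c) ≤ (1+ε)^t f̃_t(c)` for all `1 ≤ t ≤ T` and `0 ≤ c ≤ c_t`. -/
theorem stmt1 {n : ℕ} (T : ℕ) (hT : 1 ≤ T)
    (c : ℕ → ℕ) (hc0 : c 0 = 0) (hmono : ∀ s t, s ≤ t → t ≤ T → c s ≤ c t)
    (r q : Fin n → ℕ) (hr : ∀ i, 0 < r i) (hq : ∀ i, 0 < q i)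
    (d : Fin n → ℕ) (hd : ∀ i, 1 ≤ d i ∧ d i ≤ T)
    (f : ℕ → ℝ → EReal)
    (hf1 : f 1 = trunc (knapFn r q (Finset.univ.filter fun i => d i = 1)) (c 1))
    (hft : ∀ t, 2 ≤ t → t ≤ T →
      f t = trunc (conv (f (t - 1)) (knapFn r q (Finset.univ.filter fun i => d i = t))) (c t))
    (ε : ℝ) (hε : 0 < ε)
    (fI : ℕ → ℝ → EReal)
    (hfIgood : ∀ t, GoodVal (fI t))
    (hfIapprox : ∀ t, 1 ≤ t → t ≤ T → ∀ x : ℝ,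
      fI t x ≤ knapFn r q (Finset.univ.filter fun i => d i = t) x ∧
      knapFn r q (Finset.univ.filter fun i => d i = t) x ≤ ((1 + ε : ℝ) : EReal) * fI t x)
    (g : ℕ → ℝ → EReal) (hggood : ∀ t, GoodVal (g t))
    (hg1 : g 1 = trunc (fI 1) (c 1))
    (hgt : ∀ t, 2 ≤ t → t ≤ T → ∀ x : ℝ,
      g t x ≤ trunc (conv (g (t - 1)) (fI t)) (c t) x ∧
      trunc (conv (g (t - 1)) (fI t)) (c t) x ≤ ((1 + ε : ℝ) : EReal) * g t x) :
    ∀ t, 1 ≤ t → t ≤ T → ∀ x : ℝ, 0 ≤ x → x ≤ (c t : ℝ) →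
      g t x ≤ f t x ∧ f t x ≤ (((1 + ε) ^ t : ℝ) : EReal) * g t x := by
  -- fI is ⊥ on negatives
  have hfIneg : ∀ t, 1 ≤ t → t ≤ T → ∀ y : ℝ, y < 0 → fI t y = ⊥ := by
    intro t h1 h2 y hy
    have := (hfIapprox t h1 h2 y).1
    rw [knapFn_neg r q _ hy] at this
    exact le_bot_iff.mp this
  -- boundary lemma: f and g are ⊥ outside [0, c t]
  have hbot : ∀ t, 1 ≤ t → t ≤ T → ∀ y : ℝ, (y < 0 ∨ (c t : ℝ) < y) →
      f t y = ⊥ ∧ g t y = ⊥ := by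
    intro t ht
    induction t, ht using Nat.le_induction with
    | base =>
      intro _ y hy
      rcases hy with hy | hy
      · have hy' : y ≤ (c 1 : ℝ) := hy.le.trans (Nat.cast_nonneg _)
        rw [hf1, hg1, trunc_of_le _ hy', trunc_of_le _ hy']
        exact ⟨knapFn_neg r q _ hy, hfIneg 1 le_rfl hT y hy⟩
      · rw [hf1, hg1, trunc_of_gt _ hy, trunc_of_gt _ hy]
        exact ⟨rfl, rfl⟩
    | succ t ht IH =>
      intro htT y hy
      have ht1 : t ≤ T := le_trans (Nat.le_succ t) htT
      have h2 : 2 ≤ t + 1 := by omega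
      have hfeq : f (t+1) = trunc (conv (f t)
          (knapFn r q (Finset.univ.filter fun i => d i = (t+1)))) (c (t+1)) := by
        have := hft (t+1) h2 htT
        simpa using this
      have hg := hgt (t+1) h2 htT y
      simp only [Nat.add_sub_cancel] at hg
      rcases hy with hy | hy
      · -- y < 0
        have hy' : y ≤ (c (t+1) : ℝ) := hy.le.trans (Nat.cast_nonneg _)
        have hconvf : conv (f t) (knapFn r q (Finset.univ.filter fun i => d i = (t+1))) y = ⊥ := by
          refine le_bot_iff.mp (iSup_le fun z => ?_)
          by_cases hz : 0 ≤ z ∧ z ≤ (c t : ℝ)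
          · have : y - z < 0 := by linarith [hz.1]
            rw [knapFn_neg r q _ this, EReal.add_bot]
          · push_neg at hz
            have : z < 0 ∨ (c t : ℝ) < z := by
              by_cases h0 : 0 ≤ z
              · exact Or.inr (hz h0)
              · exact Or.inl (not_le.mp h0)
            rw [(IH ht1 z this).1, EReal.bot_add]
        have hconvg : conv (g t) (fI (t+1)) y = ⊥ := by
          refine le_bot_iff.mp (iSup_le fun z => ?_)
          by_cases hz : 0 ≤ z ∧ z ≤ (c t : ℝ)
          · have : y - z < 0 := by linarith [hz.1]
            rw [hfIneg (t+1) (by omega) htT _ this, EReal.add_bot]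
          · push_neg at hz
            have : z < 0 ∨ (c t : ℝ) < z := by
              by_cases h0 : 0 ≤ z
              · exact Or.inr (hz h0)
              · exact Or.inl (not_le.mp h0)
            rw [(IH ht1 z this).2, EReal.bot_add]
        constructor
        · rw [hfeq, trunc_of_le _ hy', hconvf]
        · have := hg.1
          rw [trunc_of_le _ hy', hconvg] at this
          exact le_bot_iff.mp this
      · -- c(t+1) < y
        constructor
        · rw [hfeq, trunc_of_gt _ hy]
        · have := hg.1
          rw [trunc_of_gt _ hy] at this
          exact le_bot_iff.mp this
  -- main induction
  intro t ht
  induction t, ht using Nat.le_induction with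
  | base =>
    intro _ x hx0 hx1
    rw [hf1, hg1, trunc_of_le _ hx1, trunc_of_le _ hx1, pow_one]
    exact hfIapprox 1 le_rfl hT x
  | succ t ht IH =>
    intro htT x hx0 hx1
    have ht1 : t ≤ T := le_trans (Nat.le_succ t) htT
    have IH' := IH ht1
    have h2 : 2 ≤ t + 1 := by omega
    have hfeq : f (t+1) = trunc (conv (f t)
        (knapFn r q (Finset.univ.filter fun i => d i = (t+1)))) (c (t+1)) := by
      have := hft (t+1) h2 htT
      simpa using this
    have hg := hgt (t+1) h2 htT x
    simp only [Nat.add_sub_cancel] at hg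
    have hgB : trunc (conv (g t) (fI (t+1))) (c (t+1)) x = conv (g t) (fI (t+1)) x :=
      trunc_of_le _ hx1
    have hfA : f (t+1) x = conv (f t)
        (knapFn r q (Finset.univ.filter fun i => d i = (t+1))) x := by
      rw [hfeq, trunc_of_le _ hx1]
    have hKpos : (0:ℝ) < (1 + ε) ^ t := by positivity
    constructor
    · -- lower bound
      rw [hfA]
      refine le_trans (le_trans hg.1 (le_of_eq hgB)) (iSup_mono fun y => ?_)
      by_cases hy : 0 ≤ y ∧ y ≤ (c t : ℝ)
      · exact add_le_add ((IH' y hy.1 hy.2).1) (hfIapprox (t+1) (by omega) htT (x - y)).1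
      · push_neg at hy
        have : y < 0 ∨ (c t : ℝ) < y := by
          by_cases h0 : 0 ≤ y
          · exact Or.inr (hy h0)
          · exact Or.inl (not_le.mp h0)
        rw [(hbot t (by omega) ht1 y this).2, EReal.bot_add]
        exact bot_le
    · -- upper bound
      rw [hfA]
      refine iSup_le fun y => ?_
      by_cases hy : 0 ≤ y ∧ y ≤ (c t : ℝ)
      · have h1 : f t y ≤ (((1+ε)^t : ℝ) : EReal) * g t y := (IH' y hy.1 hy.2).2
        have h2' : knapFn r q (Finset.univ.filter fun i => d i = (t+1)) (x - y)
            ≤ (((1+ε)^t : ℝ) : EReal) * fI (t+1) (x - y) := by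
          refine le_trans (hfIapprox (t+1) (by omega) htT (x - y)).2 ?_
          exact scale_mono' (by linarith) (le_self_pow₀ (by linarith) (by omega))
            (hfIgood (t+1) (x - y))
        refine le_trans (add_le_add h1 h2') ?_
        rw [← scale_add' hKpos (hggood t y) (hfIgood (t+1) (x - y))]
        have h3 : g t y + fI (t+1) (x - y) ≤ conv (g t) (fI (t+1)) x :=
          le_iSup (fun z => g t z + fI (t+1) (x - z)) y
        have h4 : conv (g t) (fI (t+1)) x ≤ ((1 + ε : ℝ) : EReal) * g (t+1) x := by
          rw [← hgB]; exact hg.2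
        calc (((1+ε)^t : ℝ) : EReal) * (g t y + fI (t+1) (x - y))
            ≤ (((1+ε)^t : ℝ) : EReal) * (conv (g t) (fI (t+1)) x) :=
              mul_le_mul_of_nonneg_left h3 (by exact_mod_cast hKpos.le)
          _ ≤ (((1+ε)^t : ℝ) : EReal) * (((1 + ε : ℝ) : EReal) * g (t+1) x) :=
              mul_le_mul_of_nonneg_left h4 (by exact_mod_cast hKpos.le)
          _ = (((1+ε)^(t+1) : ℝ) : EReal) * g (t+1) x := by
              rw [← mul_assoc, ← EReal.coe_mul, ← pow_succ]
      · push_neg at hy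
        have : y < 0 ∨ (c t : ℝ) < y := by
          by_cases h0 : 0 ≤ y
          · exact Or.inr (hy h0)
          · exact Or.inl (not_le.mp h0)
        rw [(hbot t (by omega) ht1 y this).1, EReal.bot_add]
        exact bot_le
end

section
/- Suppose for each t ∈ {1,…,T} a function f̃_{I(t)} approximates f_{I(t)} with factor 1+ε, and define f̃_1 = f̃_{I(1)}^{c_1} and, for 2 ≤ t ≤ T, ĥ_t = (f̃_{t−1} ⊕ f̃_{I(t)})^{c_t}, where f̃_t is any function satisfying f̃_t(c) ≤ ĥ_t(c) ≤ (1+ε)·f̃_t(c) for all c. Then the value f̃_T(c_T) approximates the MPBKP optimum within factor (1+ε)^T, i.e., f̃_T(c_T) ≤ OPT ≤ (1+ε)^T · f̃_T(c_T). -/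
open scoped BigOperators

open Classical in
/-- Exact staged knapsack value function. -/
noncomputable def mpG {n : ℕ} (c : ℕ → ℕ) (r q : Fin n → ℕ) (d : Fin n → ℕ) (t : ℕ) :
    ℝ → EReal :=
  fun x =>
    if x < 0 ∨ (c t : ℝ) < x then ⊥
    else ((Finset.univ : Finset (Finset (Fin n))).filter fun S =>
        (∀ i ∈ S, d i ≤ t) ∧
        (∀ s ∈ Finset.Icc 1 (t - 1),
          (∑ i ∈ S.filter (fun i => d i ≤ s), (q i : ℝ)) ≤ (c s : ℝ)) ∧
        (∑ i ∈ S, (q i : ℝ)) ≤ x).sup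
      fun S => ((∑ i ∈ S, (r i : ℝ) : ℝ) : EReal)

lemma key_add {A B a b : EReal} {k1 k2 k : ℝ} (hk1 : 0 < k1) (hk2 : 0 < k2)
    (h1k : k1 ≤ k) (h2k : k2 ≤ k)
    (ha : a = ⊥ ∨ ∃ y : ℝ, 0 ≤ y ∧ a = (y : EReal))
    (hb : b = ⊥ ∨ ∃ y : ℝ, 0 ≤ y ∧ b = (y : EReal))
    (hA : A ≤ ((k1 : ℝ) : EReal) * a) (hB : B ≤ ((k2 : ℝ) : EReal) * b) :
    A + B ≤ ((k : ℝ) : EReal) * (a + b) := by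
  rcases ha with rfl | ⟨a₀, ha₀, rfl⟩
  · rw [EReal.coe_mul_bot_of_pos hk1] at hA
    rw [le_bot_iff.1 hA, EReal.bot_add B]
    exact bot_le
  rcases hb with rfl | ⟨b₀, hb₀, rfl⟩
  · rw [EReal.coe_mul_bot_of_pos hk2] at hB
    rw [le_bot_iff.1 hB, EReal.add_bot A]
    exact bot_le
  calc A + B ≤ ((k1 : ℝ) : EReal) * a₀ + ((k2 : ℝ) : EReal) * b₀ := add_le_add hA hB
    _ = (((k1 * a₀ + k2 * b₀ : ℝ)) : EReal) := by rw [← EReal.coe_mul, ← EReal.coe_mul, EReal.coe_add]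
    _ ≤ (((k * (a₀ + b₀) : ℝ)) : EReal) := by
        apply EReal.coe_le_coe_iff.2
        nlinarith
    _ = ((k : ℝ) : EReal) * ((a₀ : EReal) + (b₀ : EReal)) := by
        rw [← EReal.coe_add, EReal.coe_mul]

lemma knap_ge {n : ℕ} (r q : Fin n → ℕ) (I : Finset (Fin n)) (S : Finset (Fin n))
    (hS : S ⊆ I) (cap : ℝ) (hcap : (∑ i ∈ S, (q i : ℝ)) ≤ cap) :
    ((∑ i ∈ S, (r i : ℝ) : ℝ) : EReal) ≤ knapFn r q I cap := by
  have h0 : (0:ℝ) ≤ ∑ i ∈ S, (q i : ℝ) := Finset.sum_nonneg fun i _ => by positivity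
  rw [knapFn, if_neg (by linarith)]
  exact Finset.le_sup (f := fun S => ((∑ i ∈ S, (r i : ℝ) : ℝ) : EReal))
    (Finset.mem_filter.2 ⟨Finset.mem_powerset.2 hS, hcap⟩)

lemma knap_le {n : ℕ} (r q : Fin n → ℕ) (I : Finset (Fin n)) (cap : ℝ) (X : EReal)
    (h : ∀ S : Finset (Fin n), S ⊆ I → (∑ i ∈ S, (q i : ℝ)) ≤ cap →
      ((∑ i ∈ S, (r i : ℝ) : ℝ) : EReal) ≤ X) :
    knapFn r q I cap ≤ X := by
  rw [knapFn]
  split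
  · exact bot_le
  · exact Finset.sup_le fun S hS => by
      rcases Finset.mem_filter.1 hS with ⟨h1, h2⟩
      exact h S (Finset.mem_powerset.1 h1) h2

lemma mpG_ge {n : ℕ} (c : ℕ → ℕ) (r q d : Fin n → ℕ) (t : ℕ) (x : ℝ)
    (hx0 : 0 ≤ x) (hxc : x ≤ (c t : ℝ)) (S : Finset (Fin n))
    (h1 : ∀ i ∈ S, d i ≤ t)
    (h2 : ∀ s ∈ Finset.Icc 1 (t - 1),
      (∑ i ∈ S.filter (fun i => d i ≤ s), (q i : ℝ)) ≤ (c s : ℝ))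
    (h3 : (∑ i ∈ S, (q i : ℝ)) ≤ x) :
    ((∑ i ∈ S, (r i : ℝ) : ℝ) : EReal) ≤ mpG c r q d t x := by
  rw [mpG, if_neg (by push_neg; exact ⟨hx0, hxc⟩)]
  refine Finset.le_sup (f := fun S => ((∑ i ∈ S, (r i : ℝ) : ℝ) : EReal)) ?_
  simp only [Finset.mem_filter]
  exact ⟨Finset.mem_univ _, h1, h2, h3⟩

lemma mpG_le {n : ℕ} (c : ℕ → ℕ) (r q d : Fin n → ℕ) (t : ℕ) (x : ℝ) (X : EReal)
    (h : ∀ S : Finset (Fin n), (∀ i ∈ S, d i ≤ t) →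
      (∀ s ∈ Finset.Icc 1 (t - 1),
        (∑ i ∈ S.filter (fun i => d i ≤ s), (q i : ℝ)) ≤ (c s : ℝ)) →
      (∑ i ∈ S, (q i : ℝ)) ≤ x →
      ((∑ i ∈ S, (r i : ℝ) : ℝ) : EReal) ≤ X) :
    mpG c r q d t x ≤ X := by
  rw [mpG]
  split
  · exact bot_le
  · refine Finset.sup_le fun S hS => ?_
    simp only [Finset.mem_filter] at hS
    exact h S hS.2.1 hS.2.2.1 hS.2.2.2

lemma mpG_one {n : ℕ} (c : ℕ → ℕ) (r q d : Fin n → ℕ) (hd1 : ∀ i, 1 ≤ d i) :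
    mpG c r q d 1 = trunc (knapFn r q (Finset.univ.filter fun i => d i = 1)) (c 1) := by
  funext x
  by_cases hx : x ≤ (c 1 : ℝ)
  · rw [trunc]
    simp only [if_pos hx]
    apply le_antisymm
    · apply mpG_le
      intro S h1 h2 h3
      apply knap_ge
      · intro i hi
        simp only [Finset.mem_filter, Finset.mem_univ, true_and]
        exact le_antisymm (h1 i hi) (hd1 i)
      · exact h3
    · apply knap_le
      intro S hsub hq
      apply mpG_ge
      · have : (0:ℝ) ≤ ∑ i ∈ S, (q i : ℝ) := Finset.sum_nonneg fun i _ => by positivity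
        linarith
      · exact hx
      · intro i hi
        have := hsub hi
        simp only [Finset.mem_filter] at this
        omega
      · simp
      · exact hq
  · rw [trunc]
    simp only [if_neg hx]
    rw [mpG, if_pos (Or.inr (lt_of_not_ge hx))]

lemma mpG_rec {n : ℕ} (c : ℕ → ℕ) (r q d : Fin n → ℕ) (u : ℕ) :
    mpG c r q d (u + 2) =
      trunc (conv (mpG c r q d (u + 1))
        (knapFn r q (Finset.univ.filter fun i => d i = u + 2))) (c (u + 2)) := by
  funext x
  by_cases hxc : x ≤ (c (u + 2) : ℝ)
  swap
  · rw [trunc]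
    simp only [if_neg hxc]
    rw [mpG, if_pos (Or.inr (lt_of_not_ge hxc))]
  rw [trunc]
  simp only [if_pos hxc, conv]
  apply le_antisymm
  · -- mpG ≤ conv
    apply mpG_le
    intro S h1 h2 h3
    set S1 := S.filter (fun i => d i ≤ u + 1) with hS1def
    set S2 := S.filter (fun i => d i = u + 2) with hS2def
    set y := ∑ i ∈ S1, (q i : ℝ) with hydef
    have hfc : S.filter (fun i => ¬ d i ≤ u + 1) = S2 := by
      apply Finset.filter_congr
      intro i hi
      have := h1 i hi
      constructor <;> (intro h; omega)
    have hsplitq : (∑ i ∈ S, (q i : ℝ)) = y + ∑ i ∈ S2, (q i : ℝ) := by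
      rw [hydef, hS1def, ← hfc]
      exact (Finset.sum_filter_add_sum_filter_not S _ _).symm
    have hsplitr : (∑ i ∈ S, (r i : ℝ)) = (∑ i ∈ S1, (r i : ℝ)) + ∑ i ∈ S2, (r i : ℝ) := by
      rw [hS1def, ← hfc]
      exact (Finset.sum_filter_add_sum_filter_not S _ _).symm
    refine le_trans ?_ (le_iSup _ y)
    have hy0 : 0 ≤ y := Finset.sum_nonneg fun i _ => by positivity
    have hyc : y ≤ (c (u + 1) : ℝ) := h2 (u + 1) (by simp)
    have t1 : ((∑ i ∈ S1, (r i : ℝ) : ℝ) : EReal) ≤ mpG c r q d (u + 1) y := by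
      apply mpG_ge _ _ _ _ _ _ hy0 hyc
      · intro i hi
        exact (Finset.mem_filter.1 hi).2
      · intro s hs
        simp only [Finset.mem_Icc] at hs
        have hff : S1.filter (fun i => d i ≤ s) = S.filter (fun i => d i ≤ s) := by
          rw [hS1def, Finset.filter_filter]
          apply Finset.filter_congr
          intro i hi
          constructor <;> (intro h; try exact h.2)
          exact ⟨by omega, h⟩
        rw [hff]
        exact h2 s (by simp only [Finset.mem_Icc]; omega)
      · exact le_of_eq hydef.symm
    have t2 : ((∑ i ∈ S2, (r i : ℝ) : ℝ) : EReal) ≤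
        knapFn r q (Finset.univ.filter fun i => d i = u + 2) (x - y) := by
      apply knap_ge
      · intro i hi
        simp only [Finset.mem_filter, Finset.mem_univ, true_and]
        exact (Finset.mem_filter.1 hi).2
      · linarith [hsplitq ▸ h3]
    calc ((∑ i ∈ S, (r i : ℝ) : ℝ) : EReal)
        = ((∑ i ∈ S1, (r i : ℝ) : ℝ) : EReal) + ((∑ i ∈ S2, (r i : ℝ) : ℝ) : EReal) := by
          rw [← EReal.coe_add, hsplitr]
      _ ≤ _ := add_le_add t1 t2
  · -- conv ≤ mpG
    apply iSup_le
    intro y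
    by_cases hy : y < 0 ∨ (c (u + 1) : ℝ) < y
    · rw [mpG, if_pos hy, EReal.bot_add]
      exact bot_le
    push_neg at hy
    by_cases hxy : x - y < 0
    · rw [knapFn, if_pos hxy, EReal.add_bot]
      exact bot_le
    push_neg at hxy
    rw [mpG, if_neg (by push_neg; exact hy), knapFn, if_neg (not_lt.2 hxy)]
    classical
    have hne1 : ((Finset.univ : Finset (Finset (Fin n))).filter fun S =>
        (∀ i ∈ S, d i ≤ u + 1) ∧
        (∀ s ∈ Finset.Icc 1 (u + 1 - 1),
          (∑ i ∈ S.filter (fun i => d i ≤ s), (q i : ℝ)) ≤ (c s : ℝ)) ∧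
        (∑ i ∈ S, (q i : ℝ)) ≤ y).Nonempty := by
      refine ⟨∅, ?_⟩
      simp only [Finset.mem_filter, Finset.mem_univ, true_and, Finset.notMem_empty,
        Finset.filter_empty, Finset.sum_empty]
      exact ⟨fun i h => absurd h (by simp), fun s _ => by positivity, hy.1⟩
    have hne2 : (((Finset.univ.filter fun i => d i = u + 2)).powerset.filter fun S =>
        (∑ i ∈ S, (q i : ℝ)) ≤ x - y).Nonempty := by
      refine ⟨∅, ?_⟩
      simp only [Finset.mem_filter, Finset.mem_powerset, Finset.empty_subset, true_and,
        Finset.sum_empty]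
      exact hxy
    obtain ⟨S1, hS1mem, hS1eq⟩ := Finset.exists_mem_eq_sup _ hne1
      (fun S => ((∑ i ∈ S, (r i : ℝ) : ℝ) : EReal))
    obtain ⟨S2, hS2mem, hS2eq⟩ := Finset.exists_mem_eq_sup _ hne2
      (fun S => ((∑ i ∈ S, (r i : ℝ) : ℝ) : EReal))
    rw [hS1eq, hS2eq]
    simp only [Finset.mem_filter, Finset.mem_univ, true_and, Finset.mem_powerset] at hS1mem hS2mem
    obtain ⟨h11, h12, h13⟩ := hS1mem
    obtain ⟨h21, h22⟩ := hS2mem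
    have hd2 : ∀ i ∈ S2, d i = u + 2 := by
      intro i hi
      have := h21 hi
      simp only [Finset.mem_filter] at this
      exact this.2
    have hdisj : Disjoint S1 S2 := by
      rw [Finset.disjoint_left]
      intro i hi1 hi2
      have := h11 i hi1
      have := hd2 i hi2
      omega
    have goal : ((∑ i ∈ S1 ∪ S2, (r i : ℝ) : ℝ) : EReal) ≤ mpG c r q d (u + 2) x := by
      apply mpG_ge _ _ _ _ _ _ (by linarith [hy.1]) hxc
      · intro i hi
        rcases Finset.mem_union.1 hi with h | h
        · exact le_trans (h11 i h) (by omega)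
        · exact le_of_eq (hd2 i h)
      · intro s hs
        simp only [Finset.mem_Icc] at hs
        have hS2e : S2.filter (fun i => d i ≤ s) = ∅ := by
          apply Finset.filter_false_of_mem
          intro i hi
          have := hd2 i hi
          omega
        rw [Finset.filter_union, hS2e, Finset.union_empty]
        rcases Nat.lt_or_ge s (u + 1) with hlt | hge
        · have hff : S1.filter (fun i => d i ≤ s) ∈ _ := Finset.mem_univ _
          exact h12 s (by simp only [Finset.mem_Icc]; omega)
        · have hseq : s = u + 1 := by omega
          subst hseq
          rw [Finset.filter_true_of_mem h11]
          linarith [h13, hy.2]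
      · rw [Finset.sum_union hdisj]
        linarith [h13, h22]
    calc ((∑ i ∈ S1, (r i : ℝ) : ℝ) : EReal) + ((∑ i ∈ S2, (r i : ℝ) : ℝ) : EReal)
        = ((∑ i ∈ S1 ∪ S2, (r i : ℝ) : ℝ) : EReal) := by
          rw [← EReal.coe_add, Finset.sum_union hdisj]
      _ ≤ _ := goal

lemma mpG_le_OPT {n : ℕ} (T : ℕ) (hT : 1 ≤ T) (c : ℕ → ℕ) (r q d : Fin n → ℕ) :
    mpG c r q d T ((c T : ℝ)) ≤ ((mpbkpOPT T c r q d : ℝ) : EReal) := by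
  apply mpG_le
  intro S h1 h2 h3
  rw [EReal.coe_le_coe_iff]
  have hnat : ((∑ i ∈ S, r i : ℕ) : ℝ) = ∑ i ∈ S, (r i : ℝ) := by push_cast; ring
  rw [← hnat, Nat.cast_le]
  apply Finset.le_sup (f := fun S => ∑ i ∈ S, r i)
  simp only [Finset.mem_filter, Finset.mem_univ, true_and]
  intro t htmem
  simp only [Finset.mem_Icc] at htmem
  rcases Nat.lt_or_ge t T with hlt | hge
  · have := h2 t (by simp only [Finset.mem_Icc]; omega)
    have hcast : ((∑ i ∈ S.filter (fun i => d i ≤ t), q i : ℕ) : ℝ)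
        = ∑ i ∈ S.filter (fun i => d i ≤ t), (q i : ℝ) := by push_cast; ring
    rw [← Nat.cast_le (α := ℝ), hcast]
    exact le_trans this (le_refl _)
  · have hteq : t = T := by omega
    subst hteq
    have hfe : S.filter (fun i => d i ≤ t) = S := Finset.filter_true_of_mem h1
    rw [hfe, ← Nat.cast_le (α := ℝ)]
    calc ((∑ i ∈ S, q i : ℕ) : ℝ) = ∑ i ∈ S, (q i : ℝ) := by push_cast; ring
      _ ≤ (c t : ℝ) := h3

lemma OPT_le_mpG {n : ℕ} (T : ℕ) (hT : 1 ≤ T) (c : ℕ → ℕ) (r q d : Fin n → ℕ)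
    (hd : ∀ i, 1 ≤ d i ∧ d i ≤ T) :
    ((mpbkpOPT T c r q d : ℝ) : EReal) ≤ mpG c r q d T ((c T : ℝ)) := by
  classical
  have hne : ((Finset.univ : Finset (Finset (Fin n))).filter fun S : Finset (Fin n) =>
      ∀ t ∈ Finset.Icc 1 T, (∑ i ∈ S.filter (fun i => d i ≤ t), q i) ≤ c t).Nonempty := by
    refine ⟨∅, ?_⟩
    simp
  obtain ⟨S, hmem, heq⟩ := Finset.exists_mem_eq_sup _ hne (fun S => ∑ i ∈ S, r i)
  simp only [Finset.mem_filter, Finset.mem_univ, true_and] at hmem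
  have hOPT : mpbkpOPT T c r q d = ∑ i ∈ S, r i := heq
  rw [hOPT]
  have hnat : ((∑ i ∈ S, r i : ℕ) : ℝ) = ∑ i ∈ S, (r i : ℝ) := by push_cast; ring
  rw [hnat]
  apply mpG_ge _ _ _ _ _ _ (by positivity) (le_refl _)
  · intro i _
    exact (hd i).2
  · intro s hs
    simp only [Finset.mem_Icc] at hs
    have := hmem s (by simp only [Finset.mem_Icc]; omega)
    calc (∑ i ∈ S.filter (fun i => d i ≤ s), (q i : ℝ))
        = ((∑ i ∈ S.filter (fun i => d i ≤ s), q i : ℕ) : ℝ) := by push_cast; ring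
      _ ≤ (c s : ℝ) := by exact_mod_cast this
  · have := hmem T (by simp only [Finset.mem_Icc]; omega)
    rw [Finset.filter_true_of_mem (fun i _ => (hd i).2)] at this
    calc (∑ i ∈ S, (q i : ℝ)) = ((∑ i ∈ S, q i : ℕ) : ℝ) := by push_cast; ring
      _ ≤ (c T : ℝ) := by exact_mod_cast this

/-- If each `f̃_{I(t)}` approximates `f_{I(t)}` with factor `1+ε`, `f̃_1 = f̃_{I(1)}^{c_1}`,
and for `2 ≤ t ≤ T` the function `f̃_t` is a rounding-down of
`ĥ_t = (f̃_{t-1} ⊕ f̃_{I(t)})^{c_t}` (i.e. `f̃_t ≤ ĥ_t ≤ (1+ε) f̃_t` pointwise), then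
`f̃_T(c_T)` approximates the MPBKP optimum within factor `(1+ε)^T`. -/
theorem stmt2 {n : ℕ} (T : ℕ) (hT : 1 ≤ T)
    (c : ℕ → ℕ) (hc0 : c 0 = 0) (hmono : ∀ s t, s ≤ t → t ≤ T → c s ≤ c t)
    (r q : Fin n → ℕ) (hr : ∀ i, 0 < r i) (hq : ∀ i, 0 < q i)
    (d : Fin n → ℕ) (hd : ∀ i, 1 ≤ d i ∧ d i ≤ T)
    (ε : ℝ) (hε : 0 < ε)
    (fI : ℕ → ℝ → EReal)
    (hfIgood : ∀ t, GoodVal (fI t))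
    (hfIapprox : ∀ t, 1 ≤ t → t ≤ T → ∀ x : ℝ,
      fI t x ≤ knapFn r q (Finset.univ.filter fun i => d i = t) x ∧
      knapFn r q (Finset.univ.filter fun i => d i = t) x ≤ ((1 + ε : ℝ) : EReal) * fI t x)
    (g : ℕ → ℝ → EReal) (hggood : ∀ t, GoodVal (g t))
    (hg1 : g 1 = trunc (fI 1) (c 1))
    (hgt : ∀ t, 2 ≤ t → t ≤ T → ∀ x : ℝ,
      g t x ≤ trunc (conv (g (t - 1)) (fI t)) (c t) x ∧
      trunc (conv (g (t - 1)) (fI t)) (c t) x ≤ ((1 + ε : ℝ) : EReal) * g t x) :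
    g T (c T) ≤ ((mpbkpOPT T c r q d : ℝ) : EReal) ∧
      ((mpbkpOPT T c r q d : ℝ) : EReal) ≤ (((1 + ε) ^ T : ℝ) : EReal) * g T (c T) := by
  have hεpow : ∀ m : ℕ, (0:ℝ) < (1 + ε) ^ m := fun m => by positivity
  have main : ∀ t, 1 ≤ t → t ≤ T → ∀ x : ℝ,
      g t x ≤ mpG c r q d t x ∧
      mpG c r q d t x ≤ (((1 + ε) ^ t : ℝ) : EReal) * g t x := by
    intro t ht
    induction t, ht using Nat.le_induction with
    | base =>
      intro _ x
      rw [mpG_one c r q d (fun i => (hd i).1), hg1]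
      simp only [trunc, pow_one]
      split
      · exact ⟨(hfIapprox 1 le_rfl hT x).1, (hfIapprox 1 le_rfl hT x).2⟩
      · exact ⟨le_rfl, bot_le⟩
    | succ t ht IH =>
      intro hle x
      have htT : t ≤ T := by omega
      have IH' := IH htT
      obtain ⟨u, rfl⟩ : ∃ u, t = u + 1 := ⟨t - 1, by omega⟩
      have hg := hgt (u + 1 + 1) (by omega) hle
      simp only [Nat.add_sub_cancel] at hg
      have hrec := mpG_rec c r q d u
      have hrec' : mpG c r q d (u + 1 + 1) =
          trunc (conv (mpG c r q d (u + 1))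
            (knapFn r q (Finset.univ.filter fun i => d i = u + 1 + 1))) (c (u + 1 + 1)) := hrec
      constructor
      · refine le_trans (hg x).1 ?_
        rw [hrec']
        simp only [trunc]
        split
        · simp only [conv]
          apply iSup_mono
          intro y
          exact add_le_add (IH' y).1 (hfIapprox (u + 1 + 1) (by omega) hle (x - y)).1
        · exact le_rfl
      · rw [hrec']
        simp only [trunc]
        split
        case isTrue hx =>
          have hk2le : (1 + ε) ≤ (1 + ε) ^ (u + 1) := by
            calc (1 + ε) = (1 + ε) ^ 1 := (pow_one _).symm
              _ ≤ (1 + ε) ^ (u + 1) := pow_le_pow_right₀ (by linarith) (by omega)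
          have hknonneg : (0 : EReal) ≤ (((1 + ε) ^ (u + 1) : ℝ) : EReal) := by
            exact_mod_cast le_of_lt (hεpow (u + 1))
          have step1 : conv (mpG c r q d (u + 1))
              (knapFn r q (Finset.univ.filter fun i => d i = u + 1 + 1)) x ≤
              ((((1 + ε) ^ (u + 1) : ℝ)) : EReal) * conv (g (u + 1)) (fI (u + 1 + 1)) x := by
            simp only [conv]
            apply iSup_le
            intro y
            have h1 : mpG c r q d (u + 1) y +
                knapFn r q (Finset.univ.filter fun i => d i = u + 1 + 1) (x - y) ≤
                ((((1 + ε) ^ (u + 1) : ℝ)) : EReal) * (g (u + 1) y + fI (u + 1 + 1) (x - y)) :=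
              key_add (hεpow _) (by linarith) le_rfl hk2le
                (hggood (u + 1) y) (hfIgood (u + 1 + 1) (x - y))
                (IH' y).2 (hfIapprox (u + 1 + 1) (by omega) hle (x - y)).2
            refine le_trans h1 (mul_le_mul_of_nonneg_left ?_ hknonneg)
            exact le_iSup (fun y => g (u + 1) y + fI (u + 1 + 1) (x - y)) y
          have step2 : conv (g (u + 1)) (fI (u + 1 + 1)) x ≤
              ((1 + ε : ℝ) : EReal) * g (u + 1 + 1) x := by
            have h2 := (hg x).2
            simp only [trunc, if_pos hx] at h2
            exact h2
          refine le_trans step1 (le_trans (mul_le_mul_of_nonneg_left step2 hknonneg) ?_)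
          rw [← mul_assoc, ← EReal.coe_mul, ← pow_succ]
        case isFalse => exact bot_le
  have hmain := main T hT le_rfl ((c T : ℝ))
  exact ⟨le_trans hmain.1 (mpG_le_OPT T hT c r q d),
    le_trans (OPT_le_mpG T hT c r q d hd) hmain.2⟩
end

section
/- Given a horizon T ≥ 1, nondecreasing capacities 0 = c_0 ≤ c_1 ≤ … ≤ c_T, and n items with sizes q_i ≥ 0 and deadlines d_i ∈ {1,…,T}, the optimal value of the linear program min ∑_{i=1}^n y_i subject to ∑_{i : d_i ≤ t} x_i ≤ c_t for all t ∈ {1,…,T}, x_i + y_i = q_i for all i, and x_i, y_i ≥ 0 (over real variables), equals the total overflow Φ = max_{0 ≤ t ≤ T} ( ∑_{i : d_i ≤ t} q_i − c_t ) (which is ≥ 0 since the t = 0 term is 0). -/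
open scoped BigOperators

/-- The LP `min ∑ y_i` s.t. `∑_{i : d_i ≤ t} x_i ≤ c_t` for `1 ≤ t ≤ T`, `x_i + y_i = q_i`,
`x, y ≥ 0`, has optimal value (attained minimum) equal to the total overflow
`Φ = max_{0 ≤ t ≤ T} ( ∑_{i : d_i ≤ t} q_i - c_t )`. -/
theorem stmt7 {n : ℕ} (T : ℕ) (hT : 1 ≤ T)
    (c : ℕ → ℝ) (hc0 : c 0 = 0) (hmono : ∀ s t, s ≤ t → t ≤ T → c s ≤ c t)
    (q : Fin n → ℝ) (hq : ∀ i, 0 ≤ q i)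
    (d : Fin n → ℕ) (hd : ∀ i, 1 ≤ d i ∧ d i ≤ T) :
    IsLeast
      { v : ℝ | ∃ x y : Fin n → ℝ,
          (∀ t, 1 ≤ t → t ≤ T → (∑ i ∈ Finset.univ.filter (fun i => d i ≤ t), x i) ≤ c t) ∧
          (∀ i, x i + y i = q i) ∧ (∀ i, 0 ≤ x i) ∧ (∀ i, 0 ≤ y i) ∧
          v = ∑ i, y i }
      ((Finset.range (T + 1)).sup' ⟨0, Finset.mem_range.mpr (Nat.succ_pos T)⟩
        fun t => (∑ i ∈ Finset.univ.filter (fun i => d i ≤ t), q i) - c t) := by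
  classical
  set F : ℕ → ℝ := fun t => ∑ i ∈ Finset.univ.filter (fun i => d i ≤ t), q i with hFdef
  set Q : ℕ → ℝ := fun t => ∑ i ∈ Finset.univ.filter (fun i => d i = t), q i with hQdef
  have hF0 : F 0 = 0 := by
    rw [hFdef]
    dsimp only
    rw [Finset.filter_false_of_mem (fun i _ => by have := (hd i).1; omega), Finset.sum_empty]
  have hFmono : ∀ s t : ℕ, s ≤ t → F s ≤ F t := by
    intro s t hst
    apply Finset.sum_le_sum_of_subset_of_nonneg
    · intro i hi
      simp only [Finset.mem_filter, Finset.mem_univ, true_and] at hi ⊢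
      omega
    · intro i _ _; exact hq i
  have hQnn : ∀ t, 0 ≤ Q t := fun t => Finset.sum_nonneg fun i _ => hq i
  have hsplit : ∀ t : ℕ, Finset.univ.filter (fun i => d i ≤ t + 1)
      = Finset.univ.filter (fun i => d i ≤ t) ∪ Finset.univ.filter (fun i => d i = t + 1) := by
    intro t
    ext i
    simp only [Finset.mem_filter, Finset.mem_union, Finset.mem_univ, true_and]
    omega
  have hdisj : ∀ t : ℕ, Disjoint (Finset.univ.filter (fun i => d i ≤ t))
      (Finset.univ.filter (fun i => d i = t + 1)) := by
    intro t
    simp only [Finset.disjoint_left, Finset.mem_filter, Finset.mem_univ, true_and]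
    omega
  have hFQ : ∀ t : ℕ, F (t + 1) = F t + Q (t + 1) := by
    intro t
    rw [hFdef, hQdef]
    dsimp only
    rw [hsplit t, Finset.sum_union (hdisj t)]
  set S : ℕ → ℝ := fun t =>
    (Finset.range (t + 1)).inf' ⟨0, Finset.mem_range.mpr (Nat.succ_pos t)⟩
      (fun s => c s + F t - F s) with hSdef
  have hSle : ∀ t s : ℕ, s ≤ t → S t ≤ c s + F t - F s := by
    intro t s h
    exact Finset.inf'_le _ (Finset.mem_range.mpr (by omega))
  have hSc : ∀ t, S t ≤ c t := by
    intro t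
    have := hSle t t le_rfl
    linarith
  have hS0 : S 0 = 0 := by
    apply le_antisymm
    · have := hSc 0; linarith
    · apply Finset.le_inf'
      intro s hs
      simp only [Finset.mem_range] at hs
      have hs0 : s = 0 := by omega
      subst hs0
      linarith [hc0]
  have hSex : ∀ t : ℕ, ∃ s ∈ Finset.range (t + 1), S t = c s + F t - F s := by
    intro t
    exact Finset.exists_mem_eq_inf' _ _
  have hstep_up : ∀ t : ℕ, S (t + 1) ≤ S t + Q (t + 1) := by
    intro t
    obtain ⟨s0, hs0, hSt⟩ := hSex t
    simp only [Finset.mem_range] at hs0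
    have h1 := hSle (t + 1) s0 (by omega)
    have h2 := hFQ t
    linarith
  have hstep_lo : ∀ t : ℕ, t + 1 ≤ T → S t ≤ S (t + 1) := by
    intro t hle
    obtain ⟨s1, hs1, hSt1⟩ := hSex (t + 1)
    simp only [Finset.mem_range] at hs1
    by_cases h : s1 ≤ t
    · have h1 := hSle t s1 h
      have h2 := hFmono t (t + 1) (by omega)
      linarith
    · have hs1e : s1 = t + 1 := by omega
      subst hs1e
      have h1 := hSc t
      have h2 := hmono t (t + 1) (by omega) hle
      linarith
  have hΔnn : ∀ t : ℕ, 1 ≤ t → t ≤ T → 0 ≤ S t - S (t - 1) := by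
    intro t h1 h2
    obtain ⟨s, rfl⟩ : ∃ s, t = s + 1 := ⟨t - 1, by omega⟩
    simp only [Nat.add_sub_cancel]
    linarith [hstep_lo s (by omega)]
  have hΔQ : ∀ t : ℕ, 1 ≤ t → S t - S (t - 1) ≤ Q t := by
    intro t h1
    obtain ⟨s, rfl⟩ : ∃ s, t = s + 1 := ⟨t - 1, by omega⟩
    simp only [Nat.add_sub_cancel]
    linarith [hstep_up s]
  set x : Fin n → ℝ := fun i =>
    if 0 < Q (d i) then q i * (S (d i) - S (d i - 1)) / Q (d i) else 0 with hxdef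
  have hxnn : ∀ i, 0 ≤ x i := by
    intro i
    rw [hxdef]
    dsimp only
    split_ifs with h
    · exact div_nonneg (mul_nonneg (hq i) (hΔnn (d i) (hd i).1 (hd i).2)) (le_of_lt h)
    · exact le_refl 0
  have hxle : ∀ i, x i ≤ q i := by
    intro i
    rw [hxdef]
    dsimp only
    split_ifs with h
    · rw [div_le_iff₀ h]
      exact le_trans (mul_le_mul_of_nonneg_left (hΔQ _ (hd i).1) (hq i)) le_rfl
    · exact hq i
  have hsum_t : ∀ t : ℕ, 1 ≤ t → t ≤ T →
      ∑ i ∈ Finset.univ.filter (fun i => d i = t), x i = S t - S (t - 1) := by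
    intro t h1 h2
    by_cases hQt : 0 < Q t
    · have hcong : ∀ i ∈ Finset.univ.filter (fun i => d i = t),
          x i = q i * ((S t - S (t - 1)) / Q t) := by
        intro i hi
        simp only [Finset.mem_filter, Finset.mem_univ, true_and] at hi
        rw [hxdef]
        dsimp only
        rw [hi, if_pos hQt]
        ring
      rw [Finset.sum_congr rfl hcong, ← Finset.sum_mul]
      have hQeq : (∑ i ∈ Finset.univ.filter (fun i => d i = t), q i) = Q t := rfl
      rw [hQeq, mul_comm, div_mul_cancel₀ _ (ne_of_gt hQt)]
    · have hΔ0 : S t - S (t - 1) = 0 :=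
        le_antisymm (by linarith [hΔQ t h1, hQnn t, not_lt.mp hQt]) (hΔnn t h1 h2)
      rw [hΔ0]
      apply Finset.sum_eq_zero
      intro i hi
      simp only [Finset.mem_filter, Finset.mem_univ, true_and] at hi
      rw [hxdef]
      dsimp only
      rw [hi, if_neg hQt]
  have hcum : ∀ t : ℕ, t ≤ T →
      ∑ i ∈ Finset.univ.filter (fun i => d i ≤ t), x i = S t := by
    intro t
    induction t with
    | zero =>
      intro _
      rw [Finset.filter_false_of_mem (fun i _ => by have := (hd i).1; omega),
        Finset.sum_empty, hS0]
    | succ t ih =>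
      intro h
      rw [hsplit t, Finset.sum_union (hdisj t), ih (by omega), hsum_t (t + 1) (by omega) h]
      simp only [Nat.add_sub_cancel]
      ring
  have huniv : Finset.univ.filter (fun i => d i ≤ T) = (Finset.univ : Finset (Fin n)) :=
    Finset.filter_true_of_mem fun i _ => (hd i).2
  have hFT : F T = ∑ i, q i := by rw [hFdef]; dsimp only; rw [huniv]
  have hxT : ∑ i, x i = S T := by rw [← huniv]; exact hcum T le_rfl
  set Φ : ℝ := (Finset.range (T + 1)).sup' ⟨0, Finset.mem_range.mpr (Nat.succ_pos T)⟩
      (fun t => (∑ i ∈ Finset.univ.filter (fun i => d i ≤ t), q i) - c t) with hΦdef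
  have hΦeq : F T - S T = Φ := by
    apply le_antisymm
    · obtain ⟨s0, hs0, hSt⟩ := hSex T
      have : F T - S T = F s0 - c s0 := by rw [hSt]; ring
      rw [this]
      exact Finset.le_sup' (fun t => (∑ i ∈ Finset.univ.filter (fun i => d i ≤ t), q i) - c t) hs0
    · apply Finset.sup'_le
      intro s hs
      simp only [Finset.mem_range] at hs
      have h1 := hSle T s (by omega)
      show F s - c s ≤ F T - S T
      linarith
  constructor
  · refine ⟨x, fun i => q i - x i, ?_, fun i => by ring, hxnn,
      fun i => sub_nonneg.mpr (hxle i), ?_⟩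
    · intro t h1 h2
      rw [hcum t h2]
      exact hSc t
    · rw [Finset.sum_sub_distrib, ← hFT, hxT]
      exact hΦeq.symm
  · rintro v ⟨a, b, hcon, hab, ha, hb, rfl⟩
    apply Finset.sup'_le
    intro t ht
    simp only [Finset.mem_range] at ht
    show F t - c t ≤ ∑ i, b i
    rcases Nat.eq_zero_or_pos t with rfl | hpos
    · rw [hF0, hc0]
      simpa using Finset.sum_nonneg fun i (_ : i ∈ Finset.univ) => hb i
    · have hct := hcon t hpos (by omega)
      have hsub : ∑ i ∈ Finset.univ.filter (fun i => d i ≤ t), b i ≤ ∑ i, b i :=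
        Finset.sum_le_sum_of_subset_of_nonneg (Finset.filter_subset _ _) fun i _ _ => hb i
      have hqsplit : F t = (∑ i ∈ Finset.univ.filter (fun i => d i ≤ t), a i)
          + ∑ i ∈ Finset.univ.filter (fun i => d i ≤ t), b i := by
        rw [hFdef]
        dsimp only
        rw [← Finset.sum_add_distrib]
        exact Finset.sum_congr rfl fun i _ => (hab i).symm
      linarith
end

section
/- In an MPBKP-SS instance, let S be a set of items disjoint from each of the sets S₁ and S₂. If for some ω ∈ Ω the leftover capacities satisfy C_ω^{S₁}(t) ≥ C_ω^{S₂}(t) for all t ∈ {1,…,T}, then ΔP_ω(S₁, S) ≥ ΔP_ω(S₂, S). If this pointwise domination holds for all ω ∈ Ω, then additionally ΔP(S₁, S) ≥ ΔP(S₂, S). -/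
open scoped BigOperators

/-- Overflow of a set `S` on a capacity path `c`:
`Φ(S) = max_{0 ≤ t ≤ T} ( ∑_{i ∈ S : d_i ≤ t} q_i - c_t )`. -/
noncomputable def overflowPath {n : ℕ} (T : ℕ) (c : ℕ → ℝ) (q : Fin n → ℝ) (d : Fin n → ℕ)
    (S : Finset (Fin n)) : ℝ :=
  (Finset.range (T + 1)).sup' ⟨0, Finset.mem_range.mpr (Nat.succ_pos T)⟩
    fun t => (∑ i ∈ S.filter (fun i => d i ≤ t), q i) - c t

/-- Per-path profit `P_ω(S) = R(S) - B·Φ_ω(S)`. -/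
noncomputable def profitPath {n : ℕ} (T : ℕ) (c : ℕ → ℝ) (B : ℝ) (r q : Fin n → ℝ)
    (d : Fin n → ℕ) (S : Finset (Fin n)) : ℝ :=
  (∑ i ∈ S, r i) - B * overflowPath T c q d S

/-- Expected profit `P(S) = R(S) - B·∑_ω p(ω)·Φ_ω(S)` of an MPBKP-SS instance. -/
noncomputable def eprofit {n : ℕ} {Ω : Type*} [Fintype Ω] (T : ℕ) (c : Ω → ℕ → ℝ) (p : Ω → ℝ)
    (B : ℝ) (r q : Fin n → ℝ) (d : Fin n → ℕ) (S : Finset (Fin n)) : ℝ :=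
  (∑ i ∈ S, r i) - B * ∑ ω, p ω * overflowPath T (c ω) q d S

/-- Leftover capacity of `S` on path `c` at time `t`:
`C^S(t) = max_{0 ≤ t' ≤ t} ( c_t - c_{t'} - ∑_{i ∈ S : t' < d_i ≤ t} q_i )`. -/
noncomputable def leftover {n : ℕ} (c : ℕ → ℝ) (q : Fin n → ℝ) (d : Fin n → ℕ)
    (S : Finset (Fin n)) (t : ℕ) : ℝ :=
  (Finset.range (t + 1)).sup' ⟨0, Finset.mem_range.mpr (Nat.succ_pos t)⟩
    fun t' => c t - c t' - ∑ i ∈ S.filter (fun i => t' < d i ∧ d i ≤ t), q i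

section aux
variable {n : ℕ} {c : ℕ → ℝ} {q : Fin n → ℝ} {d : Fin n → ℕ}

lemma sum_split (X : Finset (Fin n)) {s t : ℕ} (hst : s ≤ t) :
    ∑ i ∈ X.filter (fun i => s < d i ∧ d i ≤ t), q i
      = (∑ i ∈ X.filter (fun i => d i ≤ t), q i) - ∑ i ∈ X.filter (fun i => d i ≤ s), q i := by
  have h := Finset.sum_filter_add_sum_filter_not (X.filter (fun i => d i ≤ t))
    (fun i => d i ≤ s) q
  rw [Finset.filter_filter, Finset.filter_filter] at h
  have e1 : X.filter (fun i => d i ≤ t ∧ d i ≤ s) = X.filter (fun i => d i ≤ s) := by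
    apply Finset.filter_congr; intro i _; constructor <;> intro h' <;> [exact h'.2; exact ⟨le_trans h' hst, h'⟩]
  have e2 : X.filter (fun i => d i ≤ t ∧ ¬ d i ≤ s) = X.filter (fun i => s < d i ∧ d i ≤ t) := by
    apply Finset.filter_congr; intro i _; constructor <;> intro h' <;>
      [exact ⟨Nat.lt_of_not_le h'.2, h'.1⟩; exact ⟨h'.2, Nat.not_le.mpr h'.1⟩]
  rw [e1, e2] at h
  linarith

lemma A_mono (hq : ∀ i, 0 ≤ q i) (X : Finset (Fin n)) {s t : ℕ} (hst : s ≤ t) :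
    ∑ i ∈ X.filter (fun i => d i ≤ s), q i ≤ ∑ i ∈ X.filter (fun i => d i ≤ t), q i :=
  Finset.sum_le_sum_of_subset_of_nonneg
    (by intro i hi; simp only [Finset.mem_filter] at *; exact ⟨hi.1, le_trans hi.2 hst⟩)
    (fun i _ _ => hq i)

lemma sum_union_filter {S S' : Finset (Fin n)} (h : Disjoint S' S) (P : Fin n → Prop)
    [DecidablePred P] :
    ∑ i ∈ (S' ∪ S).filter P, q i = ∑ i ∈ S'.filter P, q i + ∑ i ∈ S.filter P, q i := by
  rw [Finset.filter_union, Finset.sum_union (Finset.disjoint_filter_filter h)]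

lemma leftover_nonneg {S' : Finset (Fin n)} (t : ℕ) : 0 ≤ leftover c q d S' t := by
  have h0 : t ∈ Finset.range (t + 1) := Finset.mem_range.mpr (Nat.lt_succ_self t)
  have := Finset.le_sup' (s := Finset.range (t+1))
    (fun t' => c t - c t' - ∑ i ∈ S'.filter (fun i => t' < d i ∧ d i ≤ t), q i) h0
  have he : S'.filter (fun i => t < d i ∧ d i ≤ t) = ∅ := by
    apply Finset.filter_false_of_mem; intro i _; omega
  rw [he] at this
  simpa [leftover] using this

lemma leftover_zero (S' : Finset (Fin n)) : leftover c q d S' 0 = 0 := by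
  have he : S'.filter (fun i => 0 < d i ∧ d i ≤ 0) = ∅ := by
    apply Finset.filter_false_of_mem; intro i _; omega
  refine le_antisymm ?_ (leftover_nonneg 0)
  apply Finset.sup'_le
  intro t' ht'
  have ht0 : t' = 0 := Nat.lt_one_iff.mp (Finset.mem_range.mp ht')
  subst ht0
  rw [he]
  simp

/-- Lower bound: `Φ(S'∪S) ≥ A_S(t) - C^{S'}(t) + Φ(S')` for `t ≤ T`. -/
lemma overflow_lb {T : ℕ} (hq : ∀ i, 0 ≤ q i) {S S' : Finset (Fin n)} (h : Disjoint S' S)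
    {t : ℕ} (ht : t ≤ T) :
    (∑ i ∈ S.filter (fun i => d i ≤ t), q i) - leftover c q d S' t
      + overflowPath T c q d S' ≤ overflowPath T c q d (S' ∪ S) := by
  classical
  have hne : (Finset.range (T+1)).Nonempty := ⟨0, Finset.mem_range.mpr (Nat.succ_pos T)⟩
  obtain ⟨ts, hts, hts_eq⟩ := Finset.exists_mem_eq_sup' hne
    (fun t' => (∑ i ∈ S'.filter (fun i => d i ≤ t'), q i) - c t')
  have hΦ : overflowPath T c q d S'
      = (∑ i ∈ S'.filter (fun i => d i ≤ ts), q i) - c ts := hts_eq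
  have htsT : ts ≤ T := Nat.lt_succ_iff.mp (Finset.mem_range.mp hts)
  have hub : ∀ u, u ≤ T →
      (∑ i ∈ (S' ∪ S).filter (fun i => d i ≤ u), q i) - c u ≤ overflowPath T c q d (S' ∪ S) :=
    fun u hu => Finset.le_sup'
      (fun t' => (∑ i ∈ (S' ∪ S).filter (fun i => d i ≤ t'), q i) - c t')
      (Finset.mem_range.mpr (Nat.lt_succ_of_le hu))
  by_cases hcase : ts ≤ t
  · -- leftover at t ≥ Φ(S') - (A_{S'} t - c t)
    have hmem : ts ∈ Finset.range (t+1) := Finset.mem_range.mpr (Nat.lt_succ_of_le hcase)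
    have hlo := Finset.le_sup' (s := Finset.range (t+1))
      (fun t' => c t - c t' - ∑ i ∈ S'.filter (fun i => t' < d i ∧ d i ≤ t), q i) hmem
    rw [sum_split S' hcase] at hlo
    have hlo' : c t - c ts - ((∑ i ∈ S'.filter (fun i => d i ≤ t), q i)
        - ∑ i ∈ S'.filter (fun i => d i ≤ ts), q i) ≤ leftover c q d S' t := hlo
    have hu := hub t ht
    rw [sum_union_filter h] at hu
    linarith
  · push_neg at hcase
    have hlo := leftover_nonneg (c := c) (q := q) (d := d) (S' := S') t
    have hu := hub ts htsT
    rw [sum_union_filter h] at hu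
    have hAm : ∑ i ∈ S.filter (fun i => d i ≤ t), q i
        ≤ ∑ i ∈ S.filter (fun i => d i ≤ ts), q i := A_mono hq S hcase.le
    linarith

/-- Upper bound: exists `t ≤ T` with `Φ(S'∪S) ≤ A_S(t) - C^{S'}(t) + Φ(S')`. -/
lemma overflow_ub {T : ℕ} {S S' : Finset (Fin n)} (h : Disjoint S' S) :
    ∃ t ≤ T, overflowPath T c q d (S' ∪ S)
      ≤ (∑ i ∈ S.filter (fun i => d i ≤ t), q i) - leftover c q d S' t
        + overflowPath T c q d S' := by
  classical
  have hne : (Finset.range (T+1)).Nonempty := ⟨0, Finset.mem_range.mpr (Nat.succ_pos T)⟩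
  obtain ⟨th, hth, hth_eq⟩ := Finset.exists_mem_eq_sup' hne
    (fun t' => (∑ i ∈ (S' ∪ S).filter (fun i => d i ≤ t'), q i) - c t')
  have hthT : th ≤ T := Nat.lt_succ_iff.mp (Finset.mem_range.mp hth)
  refine ⟨th, hthT, ?_⟩
  have hΦu : overflowPath T c q d (S' ∪ S)
      = (∑ i ∈ (S' ∪ S).filter (fun i => d i ≤ th), q i) - c th := hth_eq
  rw [sum_union_filter h] at hΦu
  -- leftover c q d S' th ≤ Φ(S') - (A_{S'} th - c th)
  have hle : leftover c q d S' th ≤ overflowPath T c q d S'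
      - ((∑ i ∈ S'.filter (fun i => d i ≤ th), q i) - c th) := by
    apply Finset.sup'_le
    intro t' ht'
    have ht'le : t' ≤ th := Nat.lt_succ_iff.mp (Finset.mem_range.mp ht')
    rw [sum_split S' ht'le]
    have : (∑ i ∈ S'.filter (fun i => d i ≤ t'), q i) - c t' ≤ overflowPath T c q d S' :=
      Finset.le_sup' (fun u => (∑ i ∈ S'.filter (fun i => d i ≤ u), q i) - c u)
        (Finset.mem_range.mpr (Nat.lt_succ_of_le (le_trans ht'le hthT)))
    linarith
  linarith

/-- Core: overflow increment comparison under leftover domination. -/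
lemma overflow_key {T : ℕ} (hq : ∀ i, 0 ≤ q i) {S S₁ S₂ : Finset (Fin n)}
    (h1 : Disjoint S₁ S) (h2 : Disjoint S₂ S)
    (hdom : ∀ t, t ≤ T → leftover c q d S₂ t ≤ leftover c q d S₁ t) :
    overflowPath T c q d (S₁ ∪ S) - overflowPath T c q d S₁ ≤
      overflowPath T c q d (S₂ ∪ S) - overflowPath T c q d S₂ := by
  obtain ⟨t, htT, hub⟩ := overflow_ub (c := c) (q := q) (d := d) (T := T) h1 (S := S)
  have hlb := overflow_lb (c := c) (d := d) (T := T) hq h2 (t := t) htT (S := S)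
  have hd := hdom t htT
  linarith

end aux

/-- Leftover-domination implies overflow-increment comparison (with domination only
required for `1 ≤ t ≤ T`). -/
lemma overflow_main {n : ℕ} {T : ℕ} {c : ℕ → ℝ} {q : Fin n → ℝ} (hq : ∀ i, 0 ≤ q i)
    {d : Fin n → ℕ} {S S₁ S₂ : Finset (Fin n)} (hd1 : Disjoint S S₁) (hd2 : Disjoint S S₂)
    (hdom : ∀ t, 1 ≤ t → t ≤ T → leftover c q d S₂ t ≤ leftover c q d S₁ t) :
    overflowPath T c q d (S₁ ∪ S) - overflowPath T c q d S₁ ≤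
      overflowPath T c q d (S₂ ∪ S) - overflowPath T c q d S₂ := by
  apply overflow_key hq hd1.symm hd2.symm
  intro t htT
  rcases Nat.eq_zero_or_pos t with h0 | h0
  · subst h0; rw [leftover_zero, leftover_zero]
  · exact hdom t h0 htT

/-- If `S` is disjoint from `S₁` and `S₂`, and on a sample path `ω` the leftover capacities
satisfy `C_ω^{S₁}(t) ≥ C_ω^{S₂}(t)` for all `t`, then `ΔP_ω(S₁,S) ≥ ΔP_ω(S₂,S)`; if this
domination holds on every sample path, then also `ΔP(S₁,S) ≥ ΔP(S₂,S)`. -/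
theorem stmt8 {n : ℕ} {Ω : Type*} [Fintype Ω] (T : ℕ) (hT : 1 ≤ T)
    (c : Ω → ℕ → ℝ) (hc0 : ∀ ω, c ω 0 = 0)
    (hmono : ∀ ω, ∀ s t, s ≤ t → t ≤ T → c ω s ≤ c ω t)
    (p : Ω → ℝ) (hp : ∀ ω, 0 ≤ p ω) (hpsum : ∑ ω, p ω = 1)
    (B : ℝ) (hB : 0 < B)
    (r q : Fin n → ℝ) (hr : ∀ i, 0 < r i) (hq : ∀ i, 0 < q i)
    (d : Fin n → ℕ) (hd : ∀ i, 1 ≤ d i ∧ d i ≤ T)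
    (S S₁ S₂ : Finset (Fin n)) (hd1 : Disjoint S S₁) (hd2 : Disjoint S S₂) :
    (∀ ω : Ω, (∀ t, 1 ≤ t → t ≤ T → leftover (c ω) q d S₂ t ≤ leftover (c ω) q d S₁ t) →
      profitPath T (c ω) B r q d (S₂ ∪ S) - profitPath T (c ω) B r q d S₂ ≤
        profitPath T (c ω) B r q d (S₁ ∪ S) - profitPath T (c ω) B r q d S₁) ∧
    ((∀ ω : Ω, ∀ t, 1 ≤ t → t ≤ T → leftover (c ω) q d S₂ t ≤ leftover (c ω) q d S₁ t) →
      eprofit T c p B r q d (S₂ ∪ S) - eprofit T c p B r q d S₂ ≤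
        eprofit T c p B r q d (S₁ ∪ S) - eprofit T c p B r q d S₁) := by
  have key : ∀ ω : Ω,
      (∀ t, 1 ≤ t → t ≤ T → leftover (c ω) q d S₂ t ≤ leftover (c ω) q d S₁ t) →
      overflowPath T (c ω) q d (S₁ ∪ S) - overflowPath T (c ω) q d S₁ ≤
        overflowPath T (c ω) q d (S₂ ∪ S) - overflowPath T (c ω) q d S₂ :=
    fun ω hdom => overflow_main (fun i => (hq i).le) hd1 hd2 hdom
  have hR1 : ∑ i ∈ S₁ ∪ S, r i = ∑ i ∈ S₁, r i + ∑ i ∈ S, r i :=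
    Finset.sum_union hd1.symm
  have hR2 : ∑ i ∈ S₂ ∪ S, r i = ∑ i ∈ S₂, r i + ∑ i ∈ S, r i :=
    Finset.sum_union hd2.symm
  constructor
  · intro ω hdom
    have hkey := key ω hdom
    have hmul := mul_le_mul_of_nonneg_left hkey hB.le
    unfold profitPath
    rw [hR1, hR2]
    linarith [hmul]
  · intro hdom
    have hsum : ∑ ω, (p ω * overflowPath T (c ω) q d (S₁ ∪ S)
          - p ω * overflowPath T (c ω) q d S₁)
        ≤ ∑ ω, (p ω * overflowPath T (c ω) q d (S₂ ∪ S)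
          - p ω * overflowPath T (c ω) q d S₂) := by
      apply Finset.sum_le_sum
      intro ω _
      have hkey := key ω (hdom ω)
      have hmul := mul_le_mul_of_nonneg_left hkey (hp ω)
      rw [mul_sub, mul_sub] at hmul
      linarith
    rw [Finset.sum_sub_distrib, Finset.sum_sub_distrib] at hsum
    have hmul := mul_le_mul_of_nonneg_left hsum hB.le
    unfold eprofit
    rw [hR1, hR2]
    linarith [hmul]
end

section
/- In an MPBKP-SS instance, the expected profit is submodular in the following sense: for any sets S₁ ⊆ S₂ ⊆ {1,…,n} and any set S₃ disjoint from S₂, ΔP(S₁, S₃) ≥ ΔP(S₂, S₃). -/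
open scoped BigOperators

/-!
On one capacity path write `L_S(t)` (`dueSize`) for the total size of the items of `S` due by
`t`. With `u = L_{S₁} - c`, `g = L_{S₂ \ S₁}` and `h = L_{S₃}`, the four overflows are the
maxima of `u + h`, `u + g`, `u + g + h` and `u`, where `g` and `h` are nondecreasing in `t`.
For maximisers `t` of `u + h` and `s` of `u + g` with `t ≤ s`, moving `h` from `t` to `s` only
increases it, so `(u + h)(t) + (u + g)(s) ≤ u(t) + (u + g + h)(s)`; symmetrically if `s ≤ t`.
Hence the overflow is supermodular on every path, and averaging with weights `p ω ≥ 0` and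
scaling by `B ≥ 0` makes the profit submodular.
-/

theorem Finset.sup'_add_add_sup'_add_le {ι α : Type*} [LinearOrder ι] [AddCommGroup α]
    [LinearOrder α] [IsOrderedAddMonoid α] (s : Finset ι) (hs : s.Nonempty) (u g h : ι → α)
    (hg : Monotone g) (hh : Monotone h) :
    s.sup' hs (u + h) + s.sup' hs (u + g) ≤ s.sup' hs (u + g + h) + s.sup' hs u := by
  obtain ⟨t, ht, hut⟩ := s.exists_mem_eq_sup' hs (u + h)
  obtain ⟨r, hr, hur⟩ := s.exists_mem_eq_sup' hs (u + g)
  rw [hut, hur]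
  rcases le_total t r with htr | hrt
  · calc (u + h) t + (u + g) r = u t + ((u + g) r + h t) := by simp only [Pi.add_apply]; abel
      _ ≤ u t + ((u + g) r + h r) := by gcongr; exact hh htr
      _ = u t + (u + g + h) r := rfl
      _ ≤ _ := by rw [add_comm]; exact add_le_add (s.le_sup' _ hr) (s.le_sup' _ ht)
  · calc (u + h) t + (u + g) r = ((u + h) t + g r) + u r := by simp only [Pi.add_apply]; abel
      _ ≤ ((u + h) t + g t) + u r := by gcongr; exact hg hrt
      _ = (u + g + h) t + u r := by simp only [Pi.add_apply]; abel
      _ ≤ _ := add_le_add (s.le_sup' _ ht) (s.le_sup' _ hr)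

section Overflow

variable {n : ℕ} (q : Fin n → ℝ) (d : Fin n → ℕ)

def dueSize (S : Finset (Fin n)) (t : ℕ) : ℝ :=
  ∑ i ∈ S.filter (fun i => d i ≤ t), q i

theorem dueSize_union {S S' : Finset (Fin n)} (h : Disjoint S S') :
    dueSize q d (S ∪ S') = dueSize q d S + dueSize q d S' := by
  funext t
  simp only [dueSize, Pi.add_apply, Finset.filter_union,
    Finset.sum_union (Finset.disjoint_filter_filter h)]

theorem monotone_dueSize (hq : ∀ i, 0 ≤ q i) (S : Finset (Fin n)) :
    Monotone (dueSize q d S) := fun _ _ hst =>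
  Finset.sum_le_sum_of_subset_of_nonneg
    (Finset.monotone_filter_right S fun _ _ hi => hi.trans hst) fun i _ _ => hq i

theorem overflowPath_eq_sup' (T : ℕ) (c : ℕ → ℝ) (S : Finset (Fin n)) :
    overflowPath T c q d S =
      (Finset.range (T + 1)).sup' ⟨0, Finset.mem_range.mpr T.succ_pos⟩ (dueSize q d S - c) :=
  rfl

theorem overflowPath_union_sub_le (hq : ∀ i, 0 ≤ q i) (T : ℕ) (c : ℕ → ℝ)
    {S₁ S₂ S₃ : Finset (Fin n)} (hsub : S₁ ⊆ S₂) (hdisj : Disjoint S₂ S₃) :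
    overflowPath T c q d (S₁ ∪ S₃) - overflowPath T c q d S₁ ≤
      overflowPath T c q d (S₂ ∪ S₃) - overflowPath T c q d S₂ := by
  have hS₂ : S₂ = S₁ ∪ (S₂ \ S₁) := (Finset.union_sdiff_of_subset hsub).symm
  have hS₂S₃ : Disjoint (S₁ ∪ (S₂ \ S₁)) S₃ := hS₂ ▸ hdisj
  have key := Finset.sup'_add_add_sup'_add_le (Finset.range (T + 1))
    ⟨0, Finset.mem_range.mpr T.succ_pos⟩ (dueSize q d S₁ - c) _ _
    (monotone_dueSize q d hq (S₂ \ S₁)) (monotone_dueSize q d hq S₃)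
  rw [hS₂]
  simp only [overflowPath_eq_sup', dueSize_union q d hS₂S₃, dueSize_union q d Finset.disjoint_sdiff,
    dueSize_union q d (Finset.disjoint_of_subset_left hsub hdisj), add_sub_right_comm _ _ c]
  linarith

end Overflow

theorem eprofit_union_sub {n : ℕ} {Ω : Type*} [Fintype Ω] (T : ℕ) (c : Ω → ℕ → ℝ) (p : Ω → ℝ)
    (B : ℝ) (r q : Fin n → ℝ) (d : Fin n → ℕ) {S S' : Finset (Fin n)} (h : Disjoint S S') :
    eprofit T c p B r q d (S ∪ S') - eprofit T c p B r q d S =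
      ∑ i ∈ S', r i -
        B * ∑ ω, p ω * (overflowPath T (c ω) q d (S ∪ S') - overflowPath T (c ω) q d S) := by
  simp only [eprofit, Finset.sum_union h, mul_sub, Finset.sum_sub_distrib]
  ring

theorem stmt9_general {n : ℕ} {Ω : Type*} [Fintype Ω] (T : ℕ) (c : Ω → ℕ → ℝ)
    (p : Ω → ℝ) (hp : ∀ ω, 0 ≤ p ω) (B : ℝ) (hB : 0 < B)
    (r q : Fin n → ℝ) (hq : ∀ i, 0 < q i) (d : Fin n → ℕ)
    (S₁ S₂ S₃ : Finset (Fin n)) (hsub : S₁ ⊆ S₂) (hdisj : Disjoint S₂ S₃) :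
    eprofit T c p B r q d (S₂ ∪ S₃) - eprofit T c p B r q d S₂ ≤
      eprofit T c p B r q d (S₁ ∪ S₃) - eprofit T c p B r q d S₁ := by
  rw [eprofit_union_sub T c p B r q d hdisj,
    eprofit_union_sub T c p B r q d (Finset.disjoint_of_subset_left hsub hdisj)]
  gcongr _ - B * ∑ ω, p ω * ?_ with ω
  · exact hp ω
  · exact overflowPath_union_sub_le q d (fun i => (hq i).le) T (c ω) hsub hdisj

/-- Submodularity of the expected profit of an MPBKP-SS instance: for `S₁ ⊆ S₂` and `S₃`
disjoint from `S₂`, `ΔP(S₁,S₃) ≥ ΔP(S₂,S₃)`. -/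
theorem stmt9 {n : ℕ} {Ω : Type*} [Fintype Ω] (T : ℕ) (hT : 1 ≤ T)
    (c : Ω → ℕ → ℝ) (hc0 : ∀ ω, c ω 0 = 0)
    (hmono : ∀ ω, ∀ s t, s ≤ t → t ≤ T → c ω s ≤ c ω t)
    (p : Ω → ℝ) (hp : ∀ ω, 0 ≤ p ω) (hpsum : ∑ ω, p ω = 1)
    (B : ℝ) (hB : 0 < B)
    (r q : Fin n → ℝ) (hr : ∀ i, 0 < r i) (hq : ∀ i, 0 < q i)
    (d : Fin n → ℕ) (hd : ∀ i, 1 ≤ d i ∧ d i ≤ T)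
    (S₁ S₂ S₃ : Finset (Fin n)) (hsub : S₁ ⊆ S₂) (hdisj : Disjoint S₂ S₃) :
    eprofit T c p B r q d (S₂ ∪ S₃) - eprofit T c p B r q d S₂ ≤
      eprofit T c p B r q d (S₁ ∪ S₃) - eprofit T c p B r q d S₁ :=
  stmt9_general T c p hp B hB r q hq d S₁ S₂ S₃ hsub hdisj
end

section
/- In an MPBKP-SS instance in which all items have the same size q, let S₁ and S₂ = S₂⁻ ⊔ S₂⁺ be two disjoint sets of items, and let i, j, k be three distinct items not in S₁ ∪ S₂ such that (1) d_m ≤ d_j ≤ d_i for all items m ∈ S₂⁻, and (2) d_i ≤ d_k ≤ d_m for all items m ∈ S₂⁺. Then ΔP(S₁ ∪ {j,k}, S₂) ≤ ΔP(S₁ ∪ {i}, S₂). -/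
open scoped BigOperators

lemma key {n : ℕ} (T : ℕ) (c : ℕ → ℝ) (q : Fin n → ℝ) (d : Fin n → ℕ)
    (qv : ℝ) (hqv : 0 < qv) (hq : ∀ i, q i = qv)
    (S₁ S₂m S₂p : Finset (Fin n))
    (i j k : Fin n)
    (hjk : j ≠ k) (hjS : j ∉ insert k S₁) (hkS : k ∉ S₁) (hiS : i ∉ S₁)
    (hdisjA : Disjoint (insert j (insert k S₁)) (S₂m ∪ S₂p))
    (hdisjB : Disjoint (insert i S₁) (S₂m ∪ S₂p))
    (hdisj2 : Disjoint S₂m S₂p)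
    (hji : d j ≤ d i) (hminus : ∀ m ∈ S₂m, d m ≤ d j)
    (hikd : d i ≤ d k) (hplus : ∀ m ∈ S₂p, d k ≤ d m) :
    overflowPath T c q d ((insert i S₁) ∪ (S₂m ∪ S₂p)) +
      overflowPath T c q d (insert j (insert k S₁)) ≤
    overflowPath T c q d ((insert j (insert k S₁)) ∪ (S₂m ∪ S₂p)) +
      overflowPath T c q d (insert i S₁) := by
  classical
  set w : Finset (Fin n) → ℕ → ℝ := fun S t => ∑ x ∈ S.filter (fun x => d x ≤ t), q x with hw
  have hne : (Finset.range (T+1)).Nonempty := ⟨0, Finset.mem_range.mpr (Nat.succ_pos T)⟩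
  have hwu : ∀ (S S' : Finset (Fin n)), Disjoint S S' → ∀ x, w (S ∪ S') x = w S x + w S' x := by
    intro S S' hd x
    simp only [hw]
    rw [Finset.filter_union, Finset.sum_union (Finset.disjoint_filter_filter hd)]
  have hwi : ∀ (a : Fin n) (S : Finset (Fin n)), a ∉ S → ∀ x,
      w (insert a S) x = (if d a ≤ x then qv else 0) + w S x := by
    intro a S ha x
    simp only [hw, Finset.filter_insert]
    split_ifs with h
    · rw [Finset.sum_insert (fun hmem => ha (Finset.mem_filter.mp hmem).1), hq a]
    · rw [zero_add]
  have hwitness : ∀ (S : Finset (Fin n)) (s t : ℕ), w S s < w S t → ∃ m ∈ S, s < d m ∧ d m ≤ t := by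
    intro S s t hlt
    by_contra hcon
    push_neg at hcon
    refine absurd hlt (not_lt.mpr ?_)
    apply Finset.sum_le_sum_of_subset_of_nonneg
    · intro x hx
      simp only [Finset.mem_filter] at *
      refine ⟨hx.1, ?_⟩
      by_contra h
      push_neg at h
      exact absurd hx.2 (not_le.mpr (hcon x hx.1 h))
    · intro x _ _; rw [hq x]; exact hqv.le
  -- maximizers
  obtain ⟨t, htm, ht⟩ := Finset.exists_mem_eq_sup' hne
    (fun t => (∑ x ∈ ((insert i S₁) ∪ (S₂m ∪ S₂p)).filter (fun x => d x ≤ t), q x) - c t)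
  obtain ⟨s, hsm, hs⟩ := Finset.exists_mem_eq_sup' hne
    (fun t => (∑ x ∈ (insert j (insert k S₁)).filter (fun x => d x ≤ t), q x) - c t)
  have hB_eq : overflowPath T c q d ((insert i S₁) ∪ (S₂m ∪ S₂p))
      = w ((insert i S₁) ∪ (S₂m ∪ S₂p)) t - c t := ht
  have hA_eq : overflowPath T c q d (insert j (insert k S₁))
      = w (insert j (insert k S₁)) s - c s := hs
  have hAS_ge : ∀ x ∈ Finset.range (T+1),
      w ((insert j (insert k S₁)) ∪ (S₂m ∪ S₂p)) x - c x
        ≤ overflowPath T c q d ((insert j (insert k S₁)) ∪ (S₂m ∪ S₂p)) := by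
    intro x hx
    exact Finset.le_sup' (fun t => (∑ y ∈ ((insert j (insert k S₁)) ∪ (S₂m ∪ S₂p)).filter
      (fun y => d y ≤ t), q y) - c t) hx
  have hB_ge : ∀ x ∈ Finset.range (T+1),
      w (insert i S₁) x - c x ≤ overflowPath T c q d (insert i S₁) := by
    intro x hx
    exact Finset.le_sup' (fun t => (∑ y ∈ (insert i S₁).filter (fun y => d y ≤ t), q y) - c t) hx
  by_cases hcase : w (S₂m ∪ S₂p) t ≤ w (S₂m ∪ S₂p) s
  · -- option 2 : use s for A∪S₂ and t for B
    have h1 := hAS_ge s hsm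
    have h2 := hB_ge t htm
    rw [hwu _ _ hdisjA s] at h1
    rw [hwu _ _ hdisjB t] at hB_eq
    linarith
  · -- option 1 : use t for A∪S₂ and s for B
    push_neg at hcase
    have h1 := hAS_ge t htm
    have h2 := hB_ge s hsm
    rw [hwu _ _ hdisjA t] at h1
    rw [hwu _ _ hdisjB t] at hB_eq
    -- expand the small sets
    have eA : ∀ x, w (insert j (insert k S₁)) x
        = (if d j ≤ x then qv else 0) + ((if d k ≤ x then qv else 0) + w S₁ x) := by
      intro x
      rw [hwi j _ hjS x, hwi k _ hkS x]
    have eB : ∀ x, w (insert i S₁) x = (if d i ≤ x then qv else 0) + w S₁ x := by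
      intro x; rw [hwi i _ hiS x]
    -- key indicator inequality
    have hind : (if d i ≤ t then qv else 0) + (if d j ≤ s then qv else 0)
        + (if d k ≤ s then qv else 0)
        ≤ (if d j ≤ t then qv else 0) + (if d k ≤ t then qv else 0)
        + (if d i ≤ s then qv else 0) := by
      rw [hwu _ _ hdisj2 t, hwu _ _ hdisj2 s] at hcase
      have : w S₂m s < w S₂m t ∨ w S₂p s < w S₂p t := by
        by_contra hco; push_neg at hco; linarith [hco.1, hco.2]
      rcases this with hm | hp'
      · obtain ⟨m, hmS, hm1, hm2⟩ := hwitness _ _ _ hm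
        have hjs : ¬ d j ≤ s := by have := hminus m hmS; omega
        split_ifs <;> first | linarith | (exfalso; omega)
      · obtain ⟨m, hmS, hm1, hm2⟩ := hwitness _ _ _ hp'
        have hkt : d k ≤ t := by have := hplus m hmS; omega
        split_ifs <;> first | linarith | (exfalso; omega)
    rw [eA t, eA s] at *
    rw [eB t, eB s] at *
    linarith

/-- In an MPBKP-SS instance with unit-size items, for disjoint sets `S₁` and
`S₂ = S₂⁻ ⊔ S₂⁺`, and distinct items `i, j, k ∉ S₁ ∪ S₂` with `d_m ≤ d_j ≤ d_i` for all
`m ∈ S₂⁻` and `d_i ≤ d_k ≤ d_m` for all `m ∈ S₂⁺`, one has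
`ΔP(S₁ ∪ {j,k}, S₂) ≤ ΔP(S₁ ∪ {i}, S₂)`. -/
theorem stmt10 {n : ℕ} {Ω : Type*} [Fintype Ω] (T : ℕ) (hT : 1 ≤ T)
    (c : Ω → ℕ → ℝ) (hc0 : ∀ ω, c ω 0 = 0)
    (hmono : ∀ ω, ∀ s t, s ≤ t → t ≤ T → c ω s ≤ c ω t)
    (p : Ω → ℝ) (hp : ∀ ω, 0 ≤ p ω) (hpsum : ∑ ω, p ω = 1)
    (B : ℝ) (hB : 0 < B)
    (r q : Fin n → ℝ) (hr : ∀ i, 0 < r i)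
    (qv : ℝ) (hqv : 0 < qv) (hq : ∀ i, q i = qv)
    (d : Fin n → ℕ) (hd : ∀ i, 1 ≤ d i ∧ d i ≤ T)
    (S₁ S₂m S₂p : Finset (Fin n))
    (hdisj12 : Disjoint S₁ (S₂m ∪ S₂p)) (hdisj2 : Disjoint S₂m S₂p)
    (i j k : Fin n) (hij : i ≠ j) (hjk : j ≠ k) (hik : i ≠ k)
    (hi : i ∉ S₁ ∪ (S₂m ∪ S₂p)) (hj : j ∉ S₁ ∪ (S₂m ∪ S₂p)) (hk : k ∉ S₁ ∪ (S₂m ∪ S₂p))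
    (hji : d j ≤ d i) (hminus : ∀ m ∈ S₂m, d m ≤ d j)
    (hikd : d i ≤ d k) (hplus : ∀ m ∈ S₂p, d k ≤ d m) :
    eprofit T c p B r q d ((insert j (insert k S₁)) ∪ (S₂m ∪ S₂p)) -
        eprofit T c p B r q d (insert j (insert k S₁)) ≤
      eprofit T c p B r q d ((insert i S₁) ∪ (S₂m ∪ S₂p)) -
        eprofit T c p B r q d (insert i S₁) := by
  classical
  set SA := insert j (insert k S₁) with hSA
  set SB := insert i S₁ with hSB
  set S₂ := S₂m ∪ S₂p with hS₂
  simp only [Finset.mem_union, not_or] at hi hj hk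
  have hdA : Disjoint SA S₂ := by
    rw [hSA, Finset.disjoint_left]
    intro a ha hb
    simp only [Finset.mem_insert] at ha
    rcases ha with rfl | rfl | ha
    · exact hj.2 hb
    · exact hk.2 hb
    · exact (Finset.disjoint_left.mp hdisj12) ha hb
  have hdB : Disjoint SB S₂ := by
    rw [hSB, Finset.disjoint_left]
    intro a ha hb
    simp only [Finset.mem_insert] at ha
    rcases ha with rfl | ha
    · exact hi.2 hb
    · exact (Finset.disjoint_left.mp hdisj12) ha hb
  have hkey : ∀ ω, overflowPath T (c ω) q d (SB ∪ S₂) + overflowPath T (c ω) q d SA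
      ≤ overflowPath T (c ω) q d (SA ∪ S₂) + overflowPath T (c ω) q d SB := by
    intro ω
    exact key T (c ω) q d qv hqv hq S₁ S₂m S₂p i j k hjk
      (by simp [Finset.mem_insert, hjk, hj.1])
      hk.1 hi.1 hdA hdB hdisj2 hji hminus hikd hplus
  have hsum : ∑ ω, p ω * overflowPath T (c ω) q d (SB ∪ S₂)
        + ∑ ω, p ω * overflowPath T (c ω) q d SA
      ≤ ∑ ω, p ω * overflowPath T (c ω) q d (SA ∪ S₂)
        + ∑ ω, p ω * overflowPath T (c ω) q d SB := by
    rw [← Finset.sum_add_distrib, ← Finset.sum_add_distrib]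
    apply Finset.sum_le_sum
    intro ω _
    rw [← mul_add, ← mul_add]
    exact mul_le_mul_of_nonneg_left (hkey ω) (hp ω)
  have hBsum := mul_le_mul_of_nonneg_left hsum hB.le
  simp only [eprofit]
  rw [Finset.sum_union hdA, Finset.sum_union hdB]
  ring_nf
  ring_nf at hBsum
  linarith
end

section
/- Consider an MPBKP instance, ε > 0, ε' > 0, and rounded rewards r̂_i satisfying r̂_i ≤ r_i ≤ (1+ε)·r̂_i for all i, taking at most m+1 distinct values. For each t partition I(t) into classes Î(t)_0, …, Î(t)_m by rounded-reward value, and let f_{Î(t)_j} denote the knapsack function of class j using the rounded rewards. Define f̃_0(c) = 0 for c ≥ 0 and −∞ for c < 0, and for each t ≥ 1 let ĥ_t be obtained from f̃_{t−1} by m+1 successive approximate convolutions, i.e., h^{(0)} = f̃_{t−1} and for j = 0,…,m the function h^{(j+1)} satisfies h^{(j+1)} ≤ h^{(j)} ⊕ f_{Î(t)_j} ≤ (1+ε')·h^{(j+1)} pointwise, with ĥ_t = h^{(m+1)}; finally set f̃_t = ĥ_t^{c_t}. Then for every t ∈ {1,…,T}, f̃_t(c) ≤ f_t(c) ≤ (1+ε)·(1+ε')^{(m+1)t}·f̃_t(c)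 for all 0 ≤ c ≤ c_t. -/
/-!
Write `F_t` for the exact dynamic program run with the rounded rewards `r̂`. Knapsack functions,
`⊕` and truncation are monotone and commute with multiplication by a positive constant, so
`r̂ ≤ r ≤ (1+ε) r̂` gives `F_t ≤ f_t ≤ (1+ε) F_t`.

In period `t` the classes are disjoint and `f_{A ∪ B} = f_A ⊕ f_B`, so by associativity of `⊕` the
`m+1` exact class convolutions compose to `f̃_{t-1} ⊕ f_{Î(t)}`. Each approximate convolution loses
at most a factor `1+ε'`, because knapsack functions take values in `{-∞} ∪ [0,∞)` and hence
`(a·u) ⊕ v ≤ a·(u ⊕ v)` for `a ≥ 1`. Truncation commutes with scaling, so the losses compound to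
`(1+ε')^{(m+1)t}` after `t` periods.
-/

open scoped BigOperators

/-- Knapsack step function of a set `I` of items with (real) rewards `r` and sizes `q`. -/
noncomputable def knapFnR {n : ℕ} (r : Fin n → ℝ) (q : Fin n → ℕ) (I : Finset (Fin n)) :
    ℝ → EReal :=
  fun cap =>
    if cap < 0 then ⊥
    else ((I.powerset.filter fun S => (∑ i ∈ S, (q i : ℝ)) ≤ cap).sup
      fun S => ((∑ i ∈ S, r i : ℝ) : EReal))

open Finset Function

namespace EReal

lemma add_iSup {ι : Sort*} (a : EReal) (f : ι → EReal) : a + ⨆ i, f i = ⨆ i, a + f i :=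
  le_antisymm
    (add_le_of_forall_lt fun _ ha' _ hb' => by
      obtain ⟨i, hi⟩ := lt_iSup_iff.1 hb'
      exact (add_le_add ha'.le hi.le).trans (le_iSup (fun i => a + f i) i))
    (iSup_le fun i => add_le_add le_rfl (le_iSup f i))

lemma iSup_add {ι : Sort*} (f : ι → EReal) (a : EReal) : (⨆ i, f i) + a = ⨆ i, f i + a := by
  simp only [add_comm _ a, add_iSup]

lemma coe_mul_iSup_of_pos {ι : Sort*} {a : ℝ} (ha : 0 < a) (f : ι → EReal) :
    (a : EReal) * ⨆ i, f i = ⨆ i, (a : EReal) * f i := by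
  refine Monotone.map_iSup_of_continuousAt (f := fun x => (a : EReal) * x) ?_
    (fun _ _ h => mul_le_mul_of_nonneg_left h (by exact_mod_cast ha.le)) (coe_mul_bot_of_pos ha)
  have ha0 : (a : EReal) ≠ 0 := coe_ne_zero.2 ha.ne'
  exact (continuousAt_mul (Or.inl ha0) (Or.inl ha0) (Or.inl (coe_ne_bot a))
    (Or.inl (coe_ne_top a))).comp (continuous_const.prodMk continuous_id).continuousAt

lemma le_coe_mul_self {a : ℝ} (ha : 1 ≤ a) {v : EReal} (hv : v = ⊥ ∨ 0 ≤ v) :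
    v ≤ a * v := by
  rcases hv with rfl | hv
  · exact bot_le
  · simpa using mul_le_mul_of_nonneg_right (by exact_mod_cast ha : (1 : EReal) ≤ a) hv

end EReal

section MaxPlus

variable {f f' g g' : ℝ → EReal}

lemma conv_mono (hf : f ≤ f') (hg : g ≤ g') : conv f g ≤ conv f' g' :=
  fun x => iSup_mono fun y => add_le_add (hf y) (hg (x - y))

lemma conv_assoc (f g k : ℝ → EReal) : conv (conv f g) k = conv f (conv g k) := by
  funext x
  calc ⨆ y, (⨆ z, f z + g (y - z)) + k (x - y)
      = ⨆ z, ⨆ y, f z + (g (y - z) + k (x - y)) := by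
        simp only [EReal.iSup_add, add_assoc]; exact iSup_comm
    _ = ⨆ z, f z + ⨆ u, g u + k (x - z - u) := by
        refine iSup_congr fun z => ?_
        rw [EReal.add_iSup, ← (Equiv.addRight z).surjective.iSup_comp]
        refine iSup_congr fun u => ?_
        simp only [Equiv.coe_addRight, add_sub_cancel_right, sub_sub, add_comm z]

lemma conv_smul {a : ℝ} (ha : 0 < a) (f g : ℝ → EReal) :
    conv ((a : EReal) • f) ((a : EReal) • g) = (a : EReal) • conv f g := by
  funext x
  simp only [conv, Pi.smul_apply, smul_eq_mul, EReal.coe_mul_iSup_of_pos ha,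
    EReal.left_distrib_of_nonneg_of_ne_top (EReal.coe_nonneg.2 ha.le) (EReal.coe_ne_top a)]

lemma conv_smul_left_le {a : ℝ} (ha : 1 ≤ a) (f : ℝ → EReal) (hg : ∀ x, g x = ⊥ ∨ 0 ≤ g x) :
    conv ((a : EReal) • f) g ≤ (a : EReal) • conv f g :=
  calc conv ((a : EReal) • f) g ≤ conv ((a : EReal) • f) ((a : EReal) • g) :=
        conv_mono le_rfl fun x => EReal.le_coe_mul_self ha (hg x)
    _ = (a : EReal) • conv f g := conv_smul (by linarith) f g

lemma trunc_mono (hf : f ≤ f') (c : ℝ) : trunc f c ≤ trunc f' c := by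
  intro x
  unfold trunc
  split_ifs
  exacts [hf x, le_rfl]

lemma trunc_smul {a : ℝ} (ha : 0 < a) (f : ℝ → EReal) (c : ℝ) :
    trunc ((a : EReal) • f) c = (a : EReal) • trunc f c := by
  funext x
  simp only [trunc, Pi.smul_apply, smul_eq_mul]
  split_ifs
  exacts [rfl, (EReal.coe_mul_bot_of_pos ha).symm]

end MaxPlus

section Knapsack

variable {n : ℕ} {w w' : Fin n → ℝ} {q : Fin n → ℕ} {I : Finset (Fin n)} {x : ℝ}

lemma knapFnR_of_neg (hx : x < 0) : knapFnR w q I x = ⊥ := if_pos hx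

lemma le_knapFnR {S : Finset (Fin n)} (hS : S ⊆ I) (hSx : ∑ i ∈ S, (q i : ℝ) ≤ x) :
    ((∑ i ∈ S, w i : ℝ) : EReal) ≤ knapFnR w q I x := by
  have hx : ¬ x < 0 := not_lt.2 ((sum_nonneg fun i _ => Nat.cast_nonneg (q i)).trans hSx)
  rw [knapFnR, if_neg hx]
  exact le_sup (f := fun S => ((∑ i ∈ S, w i : ℝ) : EReal)) (mem_filter.2 ⟨mem_powerset.2 hS, hSx⟩)

lemma exists_knapFnR_eq (hx : 0 ≤ x) :
    ∃ S ⊆ I, ∑ i ∈ S, (q i : ℝ) ≤ x ∧ knapFnR w q I x = ((∑ i ∈ S, w i : ℝ) : EReal) := by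
  rw [knapFnR, if_neg (not_lt.2 hx)]
  obtain ⟨S, hS, hsup⟩ := exists_mem_eq_sup (I.powerset.filter fun S => ∑ i ∈ S, (q i : ℝ) ≤ x)
    ⟨∅, mem_filter.2 ⟨empty_mem_powerset I, by simpa using hx⟩⟩
    fun S => ((∑ i ∈ S, w i : ℝ) : EReal)
  obtain ⟨hSI, hSx⟩ := mem_filter.1 hS
  exact ⟨S, mem_powerset.1 hSI, hSx, hsup⟩

lemma knapFnR_nonneg (hx : 0 ≤ x) : 0 ≤ knapFnR w q I x := by
  simpa using le_knapFnR (w := w) (q := q) (empty_subset I) (by simpa using hx)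

lemma knapFnR_eq_bot_or_nonneg (x : ℝ) : knapFnR w q I x = ⊥ ∨ 0 ≤ knapFnR w q I x := by
  rcases lt_or_ge x 0 with hx | hx
  exacts [Or.inl (knapFnR_of_neg hx), Or.inr (knapFnR_nonneg hx)]

lemma knapFnR_empty : knapFnR w q ∅ = fun x => if x < 0 then ⊥ else 0 := by
  funext x
  split_ifs with hx
  · exact knapFnR_of_neg hx
  · obtain ⟨S, hS, -, hval⟩ := exists_knapFnR_eq (w := w) (q := q) (I := ∅) (not_lt.1 hx)
    simp [hval, subset_empty.1 hS]

lemma knapFnR_mono_reward (hw : w ≤ w') : knapFnR w q I ≤ knapFnR w' q I := by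
  intro x
  rcases lt_or_ge x 0 with hx | hx
  · simp [knapFnR_of_neg hx]
  obtain ⟨S, hS, hSx, hval⟩ := exists_knapFnR_eq (w := w) (q := q) (I := I) hx
  rw [hval]
  exact (EReal.coe_le_coe_iff.2 (sum_le_sum fun i _ => hw i)).trans (le_knapFnR hS hSx)

lemma knapFnR_smul_le {a : ℝ} (ha : 0 < a) :
    knapFnR (a • w) q I ≤ (a : EReal) • knapFnR w q I := by
  intro x
  rcases lt_or_ge x 0 with hx | hx
  · simp [knapFnR_of_neg hx]
  obtain ⟨S, hS, hSx, hval⟩ := exists_knapFnR_eq (w := a • w) (q := q) (I := I) hx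
  simp only [hval, Pi.smul_apply, smul_eq_mul, ← mul_sum, EReal.coe_mul]
  exact mul_le_mul_of_nonneg_left (le_knapFnR hS hSx) (by exact_mod_cast ha.le)

lemma conv_knapFnR_of_disjoint {A B : Finset (Fin n)} (hAB : Disjoint A B) :
    conv (knapFnR w q A) (knapFnR w q B) = knapFnR w q (A ∪ B) := by
  funext x
  apply le_antisymm
  · refine iSup_le fun y => ?_
    rcases lt_or_ge y 0 with hy | hy
    · simp [knapFnR_of_neg hy]
    rcases lt_or_ge (x - y) 0 with hxy | hxy
    · simp [knapFnR_of_neg hxy]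
    obtain ⟨SA, hSA, hSAy, hvalA⟩ := exists_knapFnR_eq (w := w) (q := q) (I := A) hy
    obtain ⟨SB, hSB, hSBy, hvalB⟩ := exists_knapFnR_eq (w := w) (q := q) (I := B) hxy
    have hdisj : Disjoint SA SB := hAB.mono hSA hSB
    rw [hvalA, hvalB, ← EReal.coe_add, ← sum_union hdisj]
    exact le_knapFnR (union_subset_union hSA hSB) (by rw [sum_union hdisj]; linarith)
  · rcases lt_or_ge x 0 with hx | hx
    · simp [knapFnR_of_neg hx]
    obtain ⟨S, hS, hSx, hval⟩ := exists_knapFnR_eq (w := w) (q := q) (I := A ∪ B) hx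
    have hSB : S.filter (· ∉ A) ⊆ B := fun i hi => by
      obtain ⟨hiS, hiA⟩ := mem_filter.1 hi
      exact (mem_union.1 (hS hiS)).resolve_left hiA
    have hsplit : ∀ v : Fin n → ℝ, ∑ i ∈ S, v i = ∑ i ∈ S.filter (· ∈ A), v i
        + ∑ i ∈ S.filter (· ∉ A), v i := fun v => (sum_filter_add_sum_filter_not S _ v).symm
    set y := ∑ i ∈ S.filter (· ∈ A), (q i : ℝ)
    rw [hval, hsplit, EReal.coe_add]
    refine le_trans (add_le_add ?_ ?_)
      (le_iSup (fun z => knapFnR w q A z + knapFnR w q B (x - z)) y)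
    · exact le_knapFnR (fun i hi => (mem_filter.1 hi).2) le_rfl
    · exact le_knapFnR hSB (by linarith [hsplit fun i => (q i : ℝ)])

end Knapsack

section Chain

lemma pairwise_disjoint_filter_and_eq {α : Type*} (s : Finset α) (p : α → Prop) [DecidablePred p]
    (cl : α → ℕ) : Pairwise (Disjoint on fun j => s.filter fun i => p i ∧ cl i = j) :=
  fun _ _ hne => disjoint_filter.2 fun _ _ hi hi' => hne (hi.2.symm.trans hi'.2)

lemma biUnion_range_filter_and_eq {α : Type*} [DecidableEq α] {s : Finset α} {p : α → Prop}
    [DecidablePred p] {cl : α → ℕ} {m : ℕ} (hcl : ∀ i ∈ s, cl i ≤ m) :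
    (range (m + 1)).biUnion (fun j => s.filter fun i => p i ∧ cl i = j) = s.filter p := by
  ext i
  simp only [mem_biUnion, mem_range, mem_filter]
  constructor
  · rintro ⟨_, _, hi, hp, _⟩
    exact ⟨hi, hp⟩
  · rintro ⟨hi, hp⟩
    exact ⟨cl i, Nat.lt_succ_of_le (hcl i hi), hi, hp, rfl⟩

variable {n : ℕ} {w : Fin n → ℝ} {q : Fin n → ℕ} {A : ℕ → Finset (Fin n)} {H : ℕ → ℝ → EReal}

lemma le_conv_knapFnR_empty (f : ℝ → EReal) : f ≤ conv f (knapFnR w q ∅) := fun x => by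
  refine le_trans ?_ (le_iSup (fun y => f y + knapFnR w q ∅ (x - y)) x)
  simp [knapFnR_empty]

lemma conv_knapFnR_biUnion_range_succ (hA : Pairwise (Disjoint on A)) (f : ℝ → EReal) (j : ℕ) :
    conv (conv f (knapFnR w q ((range j).biUnion A))) (knapFnR w q (A j)) =
      conv f (knapFnR w q ((range (j + 1)).biUnion A)) := by
  have hdisj : Disjoint ((range j).biUnion A) (A j) :=
    (disjoint_biUnion_left _ _ _).2 fun i hi => hA (mem_range.1 hi).ne
  rw [conv_assoc, conv_knapFnR_of_disjoint hdisj, range_add_one, biUnion_insert, union_comm]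

lemma le_conv_knapFnR_biUnion (hA : Pairwise (Disjoint on A)) :
    ∀ k, (∀ j < k, H (j + 1) ≤ conv (H j) (knapFnR w q (A j))) →
      H k ≤ conv (H 0) (knapFnR w q ((range k).biUnion A))
  | 0, _ => by simpa using le_conv_knapFnR_empty (H 0)
  | k + 1, hstep =>
    (hstep k (lt_add_one k)).trans <|
      (conv_mono (le_conv_knapFnR_biUnion hA k fun j hj => hstep j (by omega)) le_rfl).trans_eq
        (conv_knapFnR_biUnion_range_succ hA _ k)

lemma conv_knapFnR_biUnion_le (hA : Pairwise (Disjoint on A)) {a : ℝ} (ha : 1 ≤ a) :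
    ∀ k, (∀ j ≤ k, conv (H j) (knapFnR w q (A j)) ≤ (a : EReal) • H (j + 1)) →
      conv (H 0) (knapFnR w q ((range (k + 1)).biUnion A)) ≤ ((a ^ (k + 1) : ℝ) : EReal) • H (k + 1)
  | 0, hstep => by simpa using hstep 0 le_rfl
  | k + 1, hstep =>
    calc conv (H 0) (knapFnR w q ((range (k + 2)).biUnion A))
        = conv (conv (H 0) (knapFnR w q ((range (k + 1)).biUnion A))) (knapFnR w q (A (k + 1))) :=
          (conv_knapFnR_biUnion_range_succ hA _ _).symm
      _ ≤ conv (((a ^ (k + 1) : ℝ) : EReal) • H (k + 1)) (knapFnR w q (A (k + 1))) :=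
          conv_mono (conv_knapFnR_biUnion_le hA ha k fun j hj => hstep j (by omega)) le_rfl
      _ ≤ ((a ^ (k + 1) : ℝ) : EReal) • conv (H (k + 1)) (knapFnR w q (A (k + 1))) :=
          conv_smul_left_le (one_le_pow₀ ha) _ knapFnR_eq_bot_or_nonneg
      _ ≤ ((a ^ (k + 1) : ℝ) : EReal) • ((a : EReal) • H (k + 2)) := fun x =>
          mul_le_mul_of_nonneg_left (hstep (k + 1) le_rfl x) (by exact_mod_cast by positivity)
      _ = ((a ^ (k + 2) : ℝ) : EReal) • H (k + 2) := by rw [smul_smul, ← EReal.coe_mul, ← pow_succ]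

end Chain

section DP

-- `knapDP w q d c t` is `f_t` computed with rewards `w`; at `t = 0` it is the knapsack function
-- of no items, i.e. `f̃_0`.
noncomputable def knapDP {n : ℕ} (w : Fin n → ℝ) (q d : Fin n → ℕ) (c : ℕ → ℕ) : ℕ → ℝ → EReal
  | 0 => knapFnR w q ∅
  | t + 1 => trunc (conv (knapDP w q d c t)
      (knapFnR w q (univ.filter fun i => d i = t + 1))) (c (t + 1))

variable {n : ℕ} {w w' : Fin n → ℝ} {q d : Fin n → ℕ} {c : ℕ → ℕ}

lemma knapDP_mono_reward (hw : w ≤ w') : ∀ t, knapDP w q d c t ≤ knapDP w' q d c t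
  | 0 => knapFnR_mono_reward hw
  | t + 1 => trunc_mono (conv_mono (knapDP_mono_reward hw t) (knapFnR_mono_reward hw)) _

lemma knapDP_smul_le {a : ℝ} (ha : 0 < a) :
    ∀ t, knapDP (a • w) q d c t ≤ (a : EReal) • knapDP w q d c t
  | 0 => knapFnR_smul_le ha
  | t + 1 => by
    rw [knapDP, knapDP, ← trunc_smul ha, ← conv_smul ha]
    exact trunc_mono (conv_mono (knapDP_smul_le ha t) (knapFnR_smul_le ha)) _

lemma eq_knapDP_of_recursion {T : ℕ} {f : ℕ → ℝ → EReal}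
    (hf1 : f 1 = trunc (knapFnR w q (univ.filter fun i => d i = 1)) (c 1))
    (hft : ∀ t, 2 ≤ t → t ≤ T →
      f t = trunc (conv (f (t - 1)) (knapFnR w q (univ.filter fun i => d i = t))) (c t)) :
    ∀ t, 1 ≤ t → t ≤ T → f t = knapDP w q d c t := by
  intro t ht
  induction t, ht using Nat.le_induction with
  | base =>
    intro _
    rw [hf1, knapDP, knapDP, conv_knapFnR_of_disjoint (disjoint_empty_left _), empty_union]
  | succ t ht ih =>
    intro htT
    rw [hft (t + 1) (by omega) htT, Nat.add_sub_cancel, ih (by omega), knapDP]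

lemma le_knapDP_and_knapDP_le_of_approx {b : ℝ} (hb : 1 ≤ b) {T : ℕ} {g : ℕ → ℝ → EReal}
    (hg0 : g 0 = knapFnR w q ∅)
    (hlow : ∀ t < T, g (t + 1) ≤
      trunc (conv (g t) (knapFnR w q (univ.filter fun i => d i = t + 1))) (c (t + 1)))
    (hup : ∀ t < T,
      trunc (conv (g t) (knapFnR w q (univ.filter fun i => d i = t + 1))) (c (t + 1)) ≤
        (b : EReal) • g (t + 1)) :
    ∀ t ≤ T, g t ≤ knapDP w q d c t ∧ knapDP w q d c t ≤ ((b ^ t : ℝ) : EReal) • g t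
  | 0, _ => by simp [hg0, knapDP]
  | t + 1, ht => by
    obtain ⟨hlo, hhi⟩ := le_knapDP_and_knapDP_le_of_approx hb hg0 hlow hup t (by omega)
    refine ⟨(hlow t ht).trans (trunc_mono (conv_mono hlo le_rfl) _), ?_⟩
    calc knapDP w q d c (t + 1)
        ≤ trunc (conv (((b ^ t : ℝ) : EReal) • g t)
            (knapFnR w q (univ.filter fun i => d i = t + 1))) (c (t + 1)) :=
          trunc_mono (conv_mono hhi le_rfl) _
      _ ≤ ((b ^ t : ℝ) : EReal) • trunc (conv (g t)
            (knapFnR w q (univ.filter fun i => d i = t + 1))) (c (t + 1)) := by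
          rw [← trunc_smul (by positivity)]
          exact trunc_mono (conv_smul_left_le (one_le_pow₀ hb) _ knapFnR_eq_bot_or_nonneg) _
      _ ≤ ((b ^ t : ℝ) : EReal) • ((b : EReal) • g (t + 1)) := fun x =>
          mul_le_mul_of_nonneg_left (hup t ht x) (by exact_mod_cast by positivity)
      _ = ((b ^ (t + 1) : ℝ) : EReal) • g (t + 1) := by rw [smul_smul, ← EReal.coe_mul, ← pow_succ]

end DP

theorem stmt14_general {n : ℕ} (T : ℕ) (c : ℕ → ℕ) (r q : Fin n → ℕ) (d : Fin n → ℕ)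
    (f : ℕ → ℝ → EReal)
    (hf1 : f 1 =
      trunc (knapFnR (fun i => (r i : ℝ)) q (Finset.univ.filter fun i => d i = 1)) (c 1))
    (hft : ∀ t, 2 ≤ t → t ≤ T →
      f t = trunc (conv (f (t - 1))
        (knapFnR (fun i => (r i : ℝ)) q (Finset.univ.filter fun i => d i = t))) (c t))
    (ε ε' : ℝ) (hε : 0 < ε) (hε' : 0 < ε')
    (rhat : Fin n → ℝ) (hrhat : ∀ i, rhat i ≤ (r i : ℝ) ∧ (r i : ℝ) ≤ (1 + ε) * rhat i)
    (m : ℕ) (cl : Fin n → ℕ) (hcl : ∀ i, cl i ≤ m)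
    (g : ℕ → ℝ → EReal)
    (hg0 : g 0 = fun x => if x < 0 then (⊥ : EReal) else 0)
    (h : ℕ → ℕ → ℝ → EReal)
    (hh0 : ∀ t, 1 ≤ t → t ≤ T → h t 0 = g (t - 1))
    (hhstep : ∀ t, 1 ≤ t → t ≤ T → ∀ j ≤ m, ∀ x : ℝ,
      h t (j + 1) x ≤
        conv (h t j) (knapFnR rhat q (Finset.univ.filter fun i => d i = t ∧ cl i = j)) x ∧
      conv (h t j) (knapFnR rhat q (Finset.univ.filter fun i => d i = t ∧ cl i = j)) x ≤
        ((1 + ε' : ℝ) : EReal) * h t (j + 1) x)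
    (hgt : ∀ t, 1 ≤ t → t ≤ T → g t = trunc (h t (m + 1)) (c t)) :
    ∀ t, 1 ≤ t → t ≤ T → ∀ x : ℝ, 0 ≤ x → x ≤ (c t : ℝ) →
      g t x ≤ f t x ∧
      f t x ≤ (((1 + ε) * (1 + ε') ^ ((m + 1) * t) : ℝ) : EReal) * g t x := by
  intro t ht1 htT x _ _
  have hperiod (s : ℕ) (hs : s < T) :
      g (s + 1) ≤ trunc (conv (g s) (knapFnR rhat q (univ.filter fun i => d i = s + 1)))
        (c (s + 1)) ∧
      trunc (conv (g s) (knapFnR rhat q (univ.filter fun i => d i = s + 1))) (c (s + 1)) ≤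
        (((1 + ε') ^ (m + 1) : ℝ) : EReal) • g (s + 1) := by
    have hh0' : g s = h (s + 1) 0 := by simpa using (hh0 (s + 1) (by omega) hs).symm
    have hstep := hhstep (s + 1) (by omega) hs
    rw [hgt (s + 1) (by omega) hs, hh0', ← biUnion_range_filter_and_eq (fun i _ => hcl i),
      ← trunc_smul (by positivity)]
    exact ⟨trunc_mono (le_conv_knapFnR_biUnion (pairwise_disjoint_filter_and_eq _ _ cl) _
        fun j hj x => (hstep j (by omega) x).1) _,
      trunc_mono (conv_knapFnR_biUnion_le (pairwise_disjoint_filter_and_eq _ _ cl) (by linarith) m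
        fun j hj x => (hstep j hj x).2) _⟩
  obtain ⟨hg_le, hle_g⟩ := le_knapDP_and_knapDP_le_of_approx (one_le_pow₀ (by linarith))
    (hg0.trans knapFnR_empty.symm) (fun s hs => (hperiod s hs).1) (fun s hs => (hperiod s hs).2)
    t htT
  have hrhat_le : rhat ≤ fun i => (r i : ℝ) := fun i => (hrhat i).1
  have hr_le : (fun i => (r i : ℝ)) ≤ (1 + ε) • rhat := fun i => (hrhat i).2
  rw [eq_knapDP_of_recursion hf1 hft t ht1 htT]
  refine ⟨(hg_le.trans (knapDP_mono_reward hrhat_le t)) x, ?_⟩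
  calc knapDP (fun i => (r i : ℝ)) q d c t x
      ≤ ((1 + ε : ℝ) : EReal) * knapDP rhat q d c t x :=
        ((knapDP_mono_reward hr_le t).trans (knapDP_smul_le (by linarith) t)) x
    _ ≤ ((1 + ε : ℝ) : EReal) * (((((1 + ε') ^ (m + 1)) ^ t : ℝ) : EReal) * g t x) :=
        mul_le_mul_of_nonneg_left (hle_g x) (by exact_mod_cast by positivity)
    _ = (((1 + ε) * (1 + ε') ^ ((m + 1) * t) : ℝ) : EReal) * g t x := by
        rw [← mul_assoc, ← EReal.coe_mul, pow_mul]

/-- Approximation guarantee for the class-based FPTAS for MPBKP: with rounded rewards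
`r̂_i ≤ r_i ≤ (1+ε)·r̂_i` grouped into `m+1` constant-reward classes, `f̃_0 = 0` on `[0,∞)`,
and each `f̃_t` obtained by `m+1` successive approximate `(max,+)`-convolutions (factor
`1+ε'` each) of `f̃_{t-1}` with the class knapsack functions followed by truncation at
`c_t`, one has `f̃_t(c) ≤ f_t(c) ≤ (1+ε)·(1+ε')^{(m+1)t}·f̃_t(c)` for `1 ≤ t ≤ T` and
`0 ≤ c ≤ c_t`. -/
theorem stmt14 {n : ℕ} (T : ℕ) (hT : 1 ≤ T)
    (c : ℕ → ℕ) (hc0 : c 0 = 0) (hmono : ∀ s t, s ≤ t → t ≤ T → c s ≤ c t)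
    (r q : Fin n → ℕ) (hr : ∀ i, 0 < r i) (hq : ∀ i, 0 < q i)
    (d : Fin n → ℕ) (hd : ∀ i, 1 ≤ d i ∧ d i ≤ T)
    (f : ℕ → ℝ → EReal)
    (hf1 : f 1 =
      trunc (knapFnR (fun i => (r i : ℝ)) q (Finset.univ.filter fun i => d i = 1)) (c 1))
    (hft : ∀ t, 2 ≤ t → t ≤ T →
      f t = trunc (conv (f (t - 1))
        (knapFnR (fun i => (r i : ℝ)) q (Finset.univ.filter fun i => d i = t))) (c t))
    (ε ε' : ℝ) (hε : 0 < ε) (hε' : 0 < ε')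
    (rhat : Fin n → ℝ) (hrhat : ∀ i, rhat i ≤ (r i : ℝ) ∧ (r i : ℝ) ≤ (1 + ε) * rhat i)
    (m : ℕ) (cl : Fin n → ℕ) (hcl : ∀ i, cl i ≤ m)
    (hclval : ∀ i j, cl i = cl j → rhat i = rhat j)
    (g : ℕ → ℝ → EReal)
    (hg0 : g 0 = fun x => if x < 0 then (⊥ : EReal) else 0)
    (h : ℕ → ℕ → ℝ → EReal)
    (hh0 : ∀ t, 1 ≤ t → t ≤ T → h t 0 = g (t - 1))
    (hhstep : ∀ t, 1 ≤ t → t ≤ T → ∀ j ≤ m, ∀ x : ℝ,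
      h t (j + 1) x ≤
        conv (h t j) (knapFnR rhat q (Finset.univ.filter fun i => d i = t ∧ cl i = j)) x ∧
      conv (h t j) (knapFnR rhat q (Finset.univ.filter fun i => d i = t ∧ cl i = j)) x ≤
        ((1 + ε' : ℝ) : EReal) * h t (j + 1) x)
    (hgt : ∀ t, 1 ≤ t → t ≤ T → g t = trunc (h t (m + 1)) (c t)) :
    ∀ t, 1 ≤ t → t ≤ T → ∀ x : ℝ, 0 ≤ x → x ≤ (c t : ℝ) →
      g t x ≤ f t x ∧
      f t x ≤ (((1 + ε) * (1 + ε') ^ ((m + 1) * t) : ℝ) : EReal) * g t x :=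
  stmt14_general T c r q d f hf1 hft ε ε' hε hε' rhat hrhat m cl hcl g hg0 h hh0 hhstep hgt
end

section
/- Let I be a nonempty finite set of items all having the same reward r > 0, with sizes q_i > 0, and let s_1 ≤ s_2 ≤ … ≤ s_l denote the sizes sorted in nondecreasing order with prefix sums σ_k = s_1 + … + s_k. Then for every c ≥ 0, f_I(c) = r·max{ k : σ_k ≤ c } (with max ∅ = 0); consequently the restriction of f_I to [0,∞) is a nondecreasing step function whose set of values is {0, r, 2r, …, lr} (r-uniform) and whose breakpoints σ_1 < σ_2 < … satisfy σ_{k+2} − σ_{k+1} ≥ σ_{k+1} − σ_k for all applicable k (pseudo-concave). -/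
open scoped BigOperators

/-!
Since every item has reward `rv`, `f_I(c)` is `rv` times the largest number of items fitting
into capacity `c`. Any `k` items weigh at least the sum `σ_k` of the `k` smallest sizes (a
sublist of a sorted list dominates the prefix of the same length), and the `k` smallest items
weigh exactly `σ_k`; so the optimum is the largest `k` with `σ_k ≤ c`. Positive sizes make
`σ` strictly increasing, so every `k ≤ l` is attained at `c = σ_k`, and pseudo-concavity is
`σ_{k+1} - σ_k = s_{k+1} ≤ s_{k+2}`.
-/

/-- Knapsack step function of a finite set `I ⊆ ℕ` of items with rewards `r` and sizes `q`:
`f_I(c) = max { ∑_{i ∈ S} r_i : S ⊆ I, ∑_{i ∈ S} q_i ≤ c }` for `c ≥ 0`, `-∞` for `c < 0`. -/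
noncomputable def knapFnL (I : Finset ℕ) (r q : ℕ → ℝ) : ℝ → EReal :=
  fun cap =>
    if cap < 0 then ⊥
    else ((I.powerset.filter fun S => (∑ i ∈ S, q i) ≤ cap).sup
      fun S => ((∑ i ∈ S, r i : ℝ) : EReal))

namespace List

section OrderedAddMonoid

variable {α : Type*} [AddCommMonoid α] [PartialOrder α] [IsOrderedAddMonoid α]

theorem sum_take_length_le_sum_of_sublist {t L : List α} (h : t <+ L)
    (hL : L.Pairwise (· ≤ ·)) : (L.take t.length).sum ≤ t.sum := by
  induction h with
  | slnil => simp
  | @cons l₁ l₂ a h ih =>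
    refine le_trans ?_ (ih hL.of_cons)
    cases hn : l₁.length with
    | zero => simp
    | succ n =>
      have hlen : n < l₂.length := by have := h.length_le; omega
      rw [take_succ_cons, sum_cons, sum_take_succ _ n hlen, add_comm]
      exact add_le_add le_rfl (rel_of_pairwise_cons hL (getElem_mem hlen))
  | cons_cons a h ih => simpa using add_le_add (le_refl a) (ih hL.of_cons)

theorem sum_take_card_le_sum_of_le {L : List α} (hL : L.Pairwise (· ≤ ·)) {m : Multiset α}
    (h : m ≤ L) : (L.take (Multiset.card m)).sum ≤ m.sum := by
  obtain ⟨l, rfl⟩ : ∃ l : List α, (l : Multiset α) = m := Quotient.exists_rep m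
  obtain ⟨t, htl, htL⟩ := Multiset.coe_le.1 h
  simpa [htl.length_eq, htl.sum_eq] using sum_take_length_le_sum_of_sublist htL hL

theorem sum_take_lt_sum_take [AddLeftStrictMono α] {L : List α} (hL : ∀ x ∈ L, 0 < x) {j k : ℕ}
    (hjk : j < k) (hk : k ≤ L.length) : (L.take j).sum < (L.take k).sum := by
  have hsplit := sum_take_add_sum_drop (L.take k) j
  rw [take_take, Nat.min_eq_left hjk.le] at hsplit
  have hdrop : 0 < ((L.take k).drop j).sum :=
    sum_pos _ (fun x hx => hL x (mem_of_mem_take (mem_of_mem_drop hx)))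
      (by simp [Nat.min_eq_left hk]; omega)
  rw [← hsplit]
  exact lt_add_of_pos_right _ hdrop

end OrderedAddMonoid

theorem sum_take_succ_sub_sum_take {α : Type*} [AddCommGroup α] (L : List α) {k : ℕ}
    (hk : k < L.length) : (L.take (k + 1)).sum - (L.take k).sum = L[k] := by
  rw [sum_take_succ L k hk, add_sub_cancel_left]

theorem sum_take_succ_sub_le {α : Type*} [AddCommGroup α] [PartialOrder α] {L : List α}
    (hL : L.Pairwise (· ≤ ·)) {k : ℕ} (hk : k + 2 ≤ L.length) :
    (L.take (k + 1)).sum - (L.take k).sum ≤ (L.take (k + 2)).sum - (L.take (k + 1)).sum := by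
  rw [sum_take_succ_sub_sum_take L (by omega), sum_take_succ_sub_sum_take L (by omega)]
  exact pairwise_iff_getElem.1 hL k (k + 1) _ _ k.lt_succ_self

end List

theorem Finset.exists_subset_val_map_eq {ι α : Type*} (s : Finset ι) (f : ι → α)
    {m : Multiset α} (h : m ≤ s.val.map f) : ∃ t ⊆ s, t.val.map f = m := by
  obtain ⟨l, rfl⟩ : ∃ l : List α, (l : Multiset α) = m := Quotient.exists_rep m
  rw [← s.coe_toList, Multiset.map_coe, Multiset.coe_le] at h
  obtain ⟨w, hwl, hws⟩ := h
  obtain ⟨x, hx, rfl⟩ := List.sublist_map_iff.1 hws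
  exact ⟨⟨x, hx.nodup s.nodup_toList⟩, fun i hi => by simpa using hx.subset hi,
    Multiset.coe_eq_coe.2 hwl⟩

noncomputable def fittingPrefixLengths (L : List ℝ) (c : ℝ) : Finset ℕ :=
  (Finset.range (L.length + 1)).filter fun k => (L.take k).sum ≤ c

@[simp]
theorem mem_fittingPrefixLengths {L : List ℝ} {c : ℝ} {k : ℕ} :
    k ∈ fittingPrefixLengths L c ↔ k ≤ L.length ∧ (L.take k).sum ≤ c := by
  simp [fittingPrefixLengths]

theorem exists_isGreatest_fittingPrefixLengths (L : List ℝ) {c : ℝ} (hc : 0 ≤ c) :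
    ∃ K, IsGreatest (fittingPrefixLengths L c : Set ℕ) K :=
  ⟨_, Finset.isGreatest_max' _ ⟨0, by simpa using hc⟩⟩

theorem isGreatest_fittingPrefixLengths_sum_take {L : List ℝ} (hL : ∀ x ∈ L, 0 < x) {k : ℕ}
    (hk : k ≤ L.length) : IsGreatest (fittingPrefixLengths L (L.take k).sum : Set ℕ) k := by
  refine ⟨by simpa using hk, fun j hj => not_lt.1 fun hkj => ?_⟩
  rw [Finset.mem_coe, mem_fittingPrefixLengths] at hj
  exact (List.sum_take_lt_sum_take hL hkj hj.1).not_ge hj.2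

theorem knapFnL_mono (I : Finset ℕ) (r q : ℕ → ℝ) {a b : ℝ} (ha : 0 ≤ a) (hab : a ≤ b) :
    knapFnL I r q a ≤ knapFnL I r q b := by
  unfold knapFnL
  rw [if_neg (not_lt.2 ha), if_neg (not_lt.2 (ha.trans hab))]
  refine Finset.sup_mono fun S hS => ?_
  rw [Finset.mem_filter] at hS ⊢
  exact ⟨hS.1, hS.2.trans hab⟩

section SortedSizes

variable {I : Finset ℕ} {r q : ℕ → ℝ} {rv : ℝ} {L : List ℝ}

theorem exists_subset_card_eq_sum_eq_sum_take (hperm : (L : Multiset ℝ) = I.val.map q) {k : ℕ}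
    (hk : k ≤ L.length) : ∃ S ⊆ I, S.card = k ∧ ∑ i ∈ S, q i = (L.take k).sum := by
  have hle : ((L.take k : List ℝ) : Multiset ℝ) ≤ I.val.map q :=
    hperm ▸ Multiset.coe_le.2 (L.take_sublist k).subperm
  obtain ⟨S, hSI, hS⟩ := I.exists_subset_val_map_eq q hle
  refine ⟨S, hSI, ?_, ?_⟩
  · simpa [Nat.min_eq_left hk] using congrArg Multiset.card hS
  · simpa using congrArg Multiset.sum hS

theorem sum_take_card_le_sum_of_subset (hsort : L.Pairwise (· ≤ ·))
    (hperm : (L : Multiset ℝ) = I.val.map q) {S : Finset ℕ} (hS : S ⊆ I) :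
    (L.take S.card).sum ≤ ∑ i ∈ S, q i := by
  have hle : S.val.map q ≤ (L : Multiset ℝ) :=
    hperm ▸ Multiset.map_le_map (Finset.val_le_iff.2 hS)
  simpa using List.sum_take_card_le_sum_of_le hsort hle

theorem knapFnL_eq_of_isGreatest (hsort : L.Pairwise (· ≤ ·))
    (hperm : (L : Multiset ℝ) = I.val.map q) (hr : ∀ i ∈ I, r i = rv) (hrv : 0 ≤ rv) {c : ℝ}
    (hc : 0 ≤ c) {K : ℕ} (hK : IsGreatest (fittingPrefixLengths L c : Set ℕ) K) :
    knapFnL I r q c = ((rv * K : ℝ) : EReal) := by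
  have hcard : I.card = L.length := by simpa using (congrArg Multiset.card hperm).symm
  have hreward : ∀ S ⊆ I, ∑ i ∈ S, r i = rv * S.card := fun S hS => by
    rw [Finset.sum_congr rfl fun i hi => hr i (hS hi), Finset.sum_const, nsmul_eq_mul, mul_comm]
  obtain ⟨hKL, hKc⟩ := mem_fittingPrefixLengths.1 hK.1
  unfold knapFnL
  rw [if_neg (not_lt.2 hc)]
  apply le_antisymm
  · refine Finset.sup_le fun S hS => ?_
    rw [Finset.mem_filter, Finset.mem_powerset] at hS
    have hSK : S.card ≤ K := hK.2 <| mem_fittingPrefixLengths.2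
      ⟨(Finset.card_le_card hS.1).trans hcard.le,
        (sum_take_card_le_sum_of_subset hsort hperm hS.1).trans hS.2⟩
    rw [hreward S hS.1]
    exact_mod_cast mul_le_mul_of_nonneg_left (Nat.cast_le.2 hSK) hrv
  · obtain ⟨S, hSI, hScard, hSsum⟩ := exists_subset_card_eq_sum_eq_sum_take hperm hKL
    calc ((rv * K : ℝ) : EReal) = ((∑ i ∈ S, r i : ℝ) : EReal) := by rw [hreward S hSI, hScard]
      _ ≤ _ := Finset.le_sup (f := fun S => ((∑ i ∈ S, r i : ℝ) : EReal))
          (Finset.mem_filter.2 ⟨Finset.mem_powerset.2 hSI, hSsum ▸ hKc⟩)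

theorem knapFnL_image_Ici (hsort : L.Pairwise (· ≤ ·)) (hperm : (L : Multiset ℝ) = I.val.map q)
    (hr : ∀ i ∈ I, r i = rv) (hrv : 0 ≤ rv) (hq : ∀ i ∈ I, 0 < q i) :
    knapFnL I r q '' Set.Ici 0 = {v | ∃ k ≤ L.length, v = ((rv * k : ℝ) : EReal)} := by
  have hpos : ∀ x ∈ L, 0 < x := fun x hx => by
    obtain ⟨i, hi, rfl⟩ := Multiset.mem_map.1 (hperm ▸ Multiset.mem_coe.2 hx)
    exact hq i hi
  ext v
  constructor
  · rintro ⟨c, hc, rfl⟩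
    obtain ⟨K, hK⟩ := exists_isGreatest_fittingPrefixLengths L hc
    have hKL : K ≤ L.length := (mem_fittingPrefixLengths.1 hK.1).1
    exact ⟨K, hKL, knapFnL_eq_of_isGreatest hsort hperm hr hrv hc hK⟩
  · rintro ⟨k, hk, rfl⟩
    have hc : 0 ≤ (L.take k).sum :=
      List.sum_nonneg fun x hx => (hpos x (List.mem_of_mem_take hx)).le
    exact ⟨_, hc, knapFnL_eq_of_isGreatest hsort hperm hr hrv hc
      (isGreatest_fittingPrefixLengths_sum_take hpos hk)⟩

end SortedSizes

theorem stmt15_general (I : Finset ℕ) (r q : ℕ → ℝ) (rv : ℝ) (hrv : 0 < rv)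
    (hr : ∀ i ∈ I, r i = rv) (hq : ∀ i ∈ I, 0 < q i)
    (L : List ℝ) (hsort : L.Pairwise (· ≤ ·)) (hperm : (L : Multiset ℝ) = I.val.map q) :
    (∀ c : ℝ, 0 ≤ c → ∀ hc : ((Finset.range (L.length + 1)).filter
        fun k => (L.take k).sum ≤ c).Nonempty,
      knapFnL I r q c =
        ((rv * ((((Finset.range (L.length + 1)).filter
          fun k => (L.take k).sum ≤ c).max' hc : ℕ) : ℝ) : ℝ) : EReal)) ∧
    (∀ a b : ℝ, 0 ≤ a → a ≤ b → knapFnL I r q a ≤ knapFnL I r q b) ∧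
    (knapFnL I r q '' Set.Ici (0 : ℝ) =
      {v : EReal | ∃ k ≤ L.length, v = ((rv * (k : ℝ) : ℝ) : EReal)}) ∧
    (∀ k : ℕ, k + 2 ≤ L.length →
      (L.take (k + 1)).sum - (L.take k).sum ≤ (L.take (k + 2)).sum - (L.take (k + 1)).sum) :=
  ⟨fun _ hc0 hc => knapFnL_eq_of_isGreatest hsort hperm hr hrv.le hc0 (Finset.isGreatest_max' _ hc),
    fun _ _ => knapFnL_mono I r q,
    knapFnL_image_Ici hsort hperm hr hrv.le hq,
    fun _ => List.sum_take_succ_sub_le hsort⟩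

/-- For a nonempty set `I` of items all of reward `rv > 0` with positive sizes, listing the
sizes in nondecreasing order `L` with prefix sums `σ_k = (L.take k).sum`, the knapsack
function satisfies `f_I(c) = rv · max{k : σ_k ≤ c}` for `c ≥ 0`; hence it is nondecreasing
on `[0,∞)`, its set of values on `[0,∞)` is `{0, rv, 2·rv, …, L.length·rv}` (`rv`-uniform),
and its breakpoints are pseudo-concave: `σ_{k+2} - σ_{k+1} ≥ σ_{k+1} - σ_k`. -/
theorem stmt15 (I : Finset ℕ) (hI : I.Nonempty) (r q : ℕ → ℝ) (rv : ℝ) (hrv : 0 < rv)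
    (hr : ∀ i ∈ I, r i = rv) (hq : ∀ i ∈ I, 0 < q i)
    (L : List ℝ) (hsort : L.Pairwise (· ≤ ·)) (hperm : (L : Multiset ℝ) = I.val.map q) :
    (∀ c : ℝ, 0 ≤ c → ∀ hc : ((Finset.range (L.length + 1)).filter
        fun k => (L.take k).sum ≤ c).Nonempty,
      knapFnL I r q c =
        ((rv * ((((Finset.range (L.length + 1)).filter
          fun k => (L.take k).sum ≤ c).max' hc : ℕ) : ℝ) : ℝ) : EReal)) ∧
    (∀ a b : ℝ, 0 ≤ a → a ≤ b → knapFnL I r q a ≤ knapFnL I r q b) ∧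
    (knapFnL I r q '' Set.Ici (0 : ℝ) =
      {v : EReal | ∃ k ≤ L.length, v = ((rv * (k : ℝ) : ℝ) : EReal)}) ∧
    (∀ k : ℕ, k + 2 ≤ L.length →
      (L.take (k + 1)).sum - (L.take k).sum ≤ (L.take (k + 2)).sum - (L.take (k + 1)).sum) :=
  stmt15_general I r q rv hrv hr hq L hsort hperm
end
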